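/- arXiv:2509.08121 — 9 statements merged into one kernel-verified Lean document; each statement's English description precedes it below -/
import Mathlib

section
/- Let A ∈ ℝ^{n×n}_{≥0} be a non-negative block matrix A = [[B, Y],[X^T, W]] where B ∈ ℝ^{d×d} has per(B) > 0, X, Y ∈ ℝ^{d×k}_{≥0}, and W ∈ ℝ^{k×k}_{≥0}. Then per(A) ≤ per(B) · per(W + X^T B* Y), where B* is the permanental inverse of B. -/
open Matrix BigOperators

/-- The permanent of a square matrix. -/
noncomputable def per {α : Type*} [DecidableEq α] [Fintype α] (A : Matrix α α ℝ) : ℝ :=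
  ∑ σ : Equiv.Perm α, ∏ i, A i (σ i)

/-- The permanental inverse. -/
noncomputable def pinv {d : ℕ} (B : Matrix (Fin (d + 1)) (Fin (d + 1)) ℝ) :
    Matrix (Fin (d + 1)) (Fin (d + 1)) ℝ :=
  Matrix.of fun i j => per (B.submatrix (Fin.succAbove j) (Fin.succAbove i)) / per B

/-!
Write `M[R, C]` (`perOn M R C`) for the permanent of the submatrix of `M` with rows `R` and
columns `C`; it vanishes unless `#R = #C`. Laplace expansion along the block rows and columns
gives `per A = ∑ U V, c(U, V) · W[Uᶜ, Vᶜ]` with `c(U, V) = ∑ T T', B[T, T'] Y[Tᶜ, V] Xᵀ[U, T'ᶜ]`,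
and expansion along the rows of `N` gives `per (W + N) = ∑ U V, N[U, V] · W[Uᶜ, Vᶜ]`. As
`N = (per B)⁻¹ • Xᵀ adj(B) Y`, it suffices to show
`per(B)^#U · c(U, V) ≤ per B · (Xᵀ adj(B) Y)[U, V]` for non-negative matrices. This follows from
two inequalities whose determinantal versions are identities:
* Cauchy–Binet: `∑ S, P[U, S] Q[S, V] ≤ (P Q)[U, V]`, the right side also counting the
  non-injective index maps;
* Jacobi: `per(B)^#S · B[Sᶜ, S'ᶜ] ≤ per B · adj(B)[S', S]`, by induction on `S` from the exchange
  inequality `M[R, C] M[T, S] ≤ ∑ i ∈ C \ S, M[R - t, C - i] M[T + t, S + i]`.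
-/

open Finset

def Equiv.subtypeApplyEqEquiv {α β : Type*} [DecidableEq α] [DecidableEq β] (a : α) (b : β) :
    {e : α ≃ β // e a = b} ≃ ({x // x ≠ a} ≃ {y // y ≠ b}) :=
  ((equivCongr (optionSubtypeNe a) (Equiv.refl β)).symm.subtypeEquiv (by simp)).trans
    (optionSubtype b)

section PerOn

variable {γ δ : Type*} [DecidableEq γ] [DecidableEq δ]

noncomputable def perOn (M : Matrix γ δ ℝ) (R : Finset γ) (C : Finset δ) : ℝ :=
  ∑ e : R ≃ C, ∏ x : R, M x (e x)

variable {M : Matrix γ δ ℝ} {R : Finset γ} {C : Finset δ}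

lemma perOn_eq_sum_equiv {ι κ : Type*} [Fintype ι] [DecidableEq ι] [Fintype κ] [DecidableEq κ]
    (eR : ι ≃ R) (eC : κ ≃ C) :
    perOn M R C = ∑ f : ι ≃ κ, ∏ i, M (eR i) (eC (f i)) := by
  refine Fintype.sum_equiv (eR.equivCongr eC).symm _ _ fun e => ?_
  exact Fintype.prod_equiv eR.symm _ _ (by simp)

lemma perOn_nonneg (hM : ∀ i j, 0 ≤ M i j) (R : Finset γ) (C : Finset δ) : 0 ≤ perOn M R C :=
  sum_nonneg fun _ _ => prod_nonneg fun _ _ => hM _ _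

lemma perOn_eq_zero_of_card_ne (h : #R ≠ #C) : perOn M R C = 0 := by
  have : IsEmpty (R ≃ C) := ⟨fun e => h (by simpa using Fintype.card_congr e)⟩
  exact sum_of_isEmpty _

@[simp]
lemma perOn_empty (M : Matrix γ δ ℝ) : perOn M ∅ ∅ = 1 := by
  rw [perOn, Fintype.sum_subsingleton _ (Equiv.equivOfIsEmpty _ _)]
  simp

lemma perOn_empty_left (M : Matrix γ δ ℝ) (C : Finset δ) :
    perOn M ∅ C = if C = ∅ then 1 else 0 := by
  split_ifs with h
  · rw [h, perOn_empty]
  · exact perOn_eq_zero_of_card_ne (by simpa [eq_comm] using h)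

lemma perOn_congr {M' : Matrix γ δ ℝ} (h : ∀ x ∈ R, ∀ y ∈ C, M x y = M' x y) :
    perOn M R C = perOn M' R C :=
  sum_congr rfl fun e _ => prod_congr rfl fun x _ => h _ x.2 _ (e x).2

lemma perOn_transpose : perOn Mᵀ C R = perOn M R C := by
  refine Fintype.sum_equiv (Equiv.symmEquiv _ _) _ _ fun e => ?_
  exact Fintype.prod_equiv e _ _ (by simp)

lemma perOn_smul (c : ℝ) (M : Matrix γ δ ℝ) (R : Finset γ) (C : Finset δ) :
    perOn (c • M) R C = c ^ #R * perOn M R C := by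
  simp only [perOn, Matrix.smul_apply, smul_eq_mul, prod_mul_distrib, prod_const, mul_sum,
    card_univ, Fintype.card_coe]

lemma perOn_submatrix {γ' δ' : Type*} [DecidableEq γ'] [DecidableEq δ'] (M : Matrix γ δ ℝ)
    (f : γ' ↪ γ) (g : δ' ↪ δ) (R : Finset γ') (C : Finset δ') :
    perOn (M.submatrix f g) R C = perOn M (R.map f) (C.map g) := by
  rw [perOn_eq_sum_equiv (R.equivMap f) (C.equivMap g)]
  rfl

lemma per_eq_perOn_univ {α : Type*} [DecidableEq α] [Fintype α] (A : Matrix α α ℝ) :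
    per A = perOn A univ univ := by
  rw [perOn_eq_sum_equiv (Equiv.subtypeUnivEquiv mem_univ).symm
    (Equiv.subtypeUnivEquiv mem_univ).symm]
  rfl

lemma per_submatrix_succAbove {d : ℕ} (B : Matrix (Fin (d + 1)) (Fin (d + 1)) ℝ)
    (j i : Fin (d + 1)) :
    per (B.submatrix j.succAbove i.succAbove) = perOn B (univ.erase j) (univ.erase i) := by
  rw [per_eq_perOn_univ]
  convert perOn_submatrix B (Fin.succAboveEmb j) (Fin.succAboveEmb i) univ univ using 2 <;>
    ext <;> simp [Fin.exists_succAbove_eq_iff]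

def Finset.subtypeNeEquivErase {a : γ} (ha : a ∈ R) : {x : R // x ≠ ⟨a, ha⟩} ≃ R.erase a where
  toFun x := ⟨x.1, mem_erase.2 ⟨fun h => x.2 (Subtype.ext h), x.1.2⟩⟩
  invFun x := ⟨⟨x, mem_of_mem_erase x.2⟩, fun h => (mem_erase.1 x.2).1 congr($h.1)⟩
  left_inv _ := rfl
  right_inv _ := rfl

lemma perOn_eq_sum_row (M : Matrix γ δ ℝ) (C : Finset δ) {a : γ} (ha : a ∈ R) :
    perOn M R C = ∑ c ∈ C, M a c * perOn M (R.erase a) (C.erase c) := by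
  rw [perOn, ← Fintype.sum_fiberwise (fun e : R ≃ C => e ⟨a, ha⟩), ← sum_coe_sort C]
  refine Fintype.sum_congr _ _ fun c => ?_
  rw [perOn_eq_sum_equiv (subtypeNeEquivErase ha) (subtypeNeEquivErase c.2), mul_sum]
  refine Fintype.sum_equiv (Equiv.subtypeApplyEqEquiv _ _) _ _ fun e => ?_
  rw [Fintype.prod_eq_mul_prod_subtype_ne _ ⟨a, ha⟩, e.2]
  rfl

lemma perOn_eq_sum_col (M : Matrix γ δ ℝ) (R : Finset γ) {b : δ} (hb : b ∈ C) :
    perOn M R C = ∑ r ∈ R, M r b * perOn M (R.erase r) (C.erase b) := by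
  simp only [← perOn_transpose (M := M), perOn_eq_sum_row Mᵀ R hb, transpose_apply]

end PerOn

lemma Finset.sum_powerset_sum_mem {δ β : Type*} [DecidableEq δ] [AddCommMonoid β] (C : Finset δ)
    (f : δ → Finset δ → Finset δ → β) :
    ∑ V ∈ C.powerset, ∑ c ∈ V, f c (V.erase c) V
      = ∑ c ∈ C, ∑ V ∈ (C.erase c).powerset, f c V (insert c V) := by
  rw [sum_sigma', sum_sigma']
  refine sum_nbij' (fun x => ⟨x.2, x.1.erase x.2⟩) (fun y => ⟨insert y.1 y.2, y.1⟩)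
    ?_ ?_ ?_ ?_ ?_
  · simp +contextual [Finset.subset_iff]
  · simp +contextual [Finset.subset_iff]
  · rintro ⟨V, c⟩ hx
    simp_all
  · rintro ⟨c, V⟩ hy
    simp only [mem_sigma, mem_powerset] at hy
    simp [erase_insert fun h => (mem_erase.1 (hy.2 h)).1 rfl]
  · rintro ⟨V, c⟩ hx
    simp_all

section Laplace

variable {γ δ : Type*} [DecidableEq γ] [DecidableEq δ]

lemma perOn_eq_sum_powerset_rows (M : Matrix γ δ ℝ) {U R : Finset γ} (hU : U ⊆ R)
    (C : Finset δ) :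
    perOn M R C = ∑ V ∈ C.powerset, perOn M U V * perOn M (R \ U) (C \ V) := by
  induction U using Finset.induction_on generalizing R C with
  | empty =>
    simp [perOn_empty_left]
  | @insert a U ha ih =>
    have hUR : U ⊆ R.erase a := subset_erase.2 ⟨(subset_insert a U).trans hU, ha⟩
    calc perOn M R C = ∑ c ∈ C, M a c * perOn M (R.erase a) (C.erase c) :=
          perOn_eq_sum_row M C (hU (mem_insert_self a U))
      _ = ∑ c ∈ C, ∑ V ∈ (C.erase c).powerset,
            M a c * perOn M U V * perOn M (R \ insert a U) (C \ insert c V) := by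
          refine sum_congr rfl fun c _ => ?_
          rw [ih hUR, mul_sum]
          refine sum_congr rfl fun V _ => ?_
          rw [sdiff_insert, sdiff_insert, erase_sdiff_comm, erase_sdiff_comm, mul_assoc]
      _ = ∑ V ∈ C.powerset, ∑ c ∈ V,
            M a c * perOn M U (V.erase c) * perOn M (R \ insert a U) (C \ V) :=
          (sum_powerset_sum_mem C fun c V' V =>
            M a c * perOn M U V' * perOn M (R \ insert a U) (C \ V)).symm
      _ = _ := by
          refine sum_congr rfl fun V _ => ?_
          rw [perOn_eq_sum_row M V (mem_insert_self a U), erase_insert ha, sum_mul]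

lemma perOn_eq_sum_powerset_cols (M : Matrix γ δ ℝ) (R : Finset γ) {V C : Finset δ}
    (hV : V ⊆ C) :
    perOn M R C = ∑ U ∈ R.powerset, perOn M U V * perOn M (R \ U) (C \ V) := by
  simp only [← perOn_transpose (M := M), perOn_eq_sum_powerset_rows Mᵀ hV R]

end Laplace

section CauchyBinet

variable {α β γ : Type*} [DecidableEq α] [DecidableEq β] [DecidableEq γ] [Fintype γ]

lemma sum_perOn_insert_mul_perOn (P : Matrix α γ ℝ) (Q : Matrix γ β ℝ) {u : α} {U : Finset α}
    (hu : u ∉ U) (V : Finset β) :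
    ∑ S : Finset γ, perOn P (insert u U) S * perOn Q S V
      = ∑ s, ∑ S ∈ (univ.erase s).powerset, ∑ v ∈ V,
          P u s * Q s v * (perOn P U S * perOn Q S (V.erase v)) :=
  calc ∑ S : Finset γ, perOn P (insert u U) S * perOn Q S V
      = ∑ S ∈ univ.powerset, ∑ s ∈ S, P u s * perOn P U (S.erase s) * perOn Q S V := by
        rw [powerset_univ]
        refine sum_congr rfl fun S _ => ?_
        rw [perOn_eq_sum_row P S (mem_insert_self u U), erase_insert hu, sum_mul]
    _ = ∑ s, ∑ S ∈ (univ.erase s).powerset, P u s * perOn P U S * perOn Q (insert s S) V :=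
        sum_powerset_sum_mem _ fun s S' S => P u s * perOn P U S' * perOn Q S V
    _ = _ := by
        refine sum_congr rfl fun s _ => sum_congr rfl fun S hS => ?_
        have hs : s ∉ S := fun h => (mem_erase.1 (mem_powerset.1 hS h)).1 rfl
        rw [perOn_eq_sum_row Q V (mem_insert_self s S), erase_insert hs, mul_sum]
        exact sum_congr rfl fun v _ => by ring

lemma sum_perOn_mul_perOn_le {P : Matrix α γ ℝ} {Q : Matrix γ β ℝ}
    (hP : ∀ i j, 0 ≤ P i j) (hQ : ∀ i j, 0 ≤ Q i j) (U : Finset α) (V : Finset β) :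
    ∑ S : Finset γ, perOn P U S * perOn Q S V ≤ perOn (P * Q) U V := by
  induction U using Finset.induction_on generalizing V with
  | empty =>
    simp [perOn_empty_left]
  | @insert u U hu ih =>
    have hPQ : ∀ s v, 0 ≤ P u s * Q s v := fun s v => mul_nonneg (hP u s) (hQ s v)
    rw [sum_perOn_insert_mul_perOn P Q hu]
    calc ∑ s, ∑ S ∈ (univ.erase s).powerset, ∑ v ∈ V,
          P u s * Q s v * (perOn P U S * perOn Q S (V.erase v))
        ≤ ∑ s, ∑ S : Finset γ, ∑ v ∈ V,
            P u s * Q s v * (perOn P U S * perOn Q S (V.erase v)) := by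
          refine sum_le_sum fun s _ => sum_le_sum_of_subset_of_nonneg (subset_univ _) ?_
          exact fun S _ _ => sum_nonneg fun v _ => mul_nonneg (hPQ s v)
            (mul_nonneg (perOn_nonneg hP _ _) (perOn_nonneg hQ _ _))
      _ = ∑ v ∈ V, ∑ S : Finset γ, ∑ s,
            P u s * Q s v * (perOn P U S * perOn Q S (V.erase v)) := by
          rw [sum_comm]
          exact (sum_congr rfl fun S _ => sum_comm).trans sum_comm
      _ = ∑ v ∈ V, (P * Q) u v * ∑ S : Finset γ, perOn P U S * perOn Q S (V.erase v) := by
          simp only [mul_apply, sum_mul, mul_sum]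
      _ ≤ ∑ v ∈ V, (P * Q) u v * perOn (P * Q) U (V.erase v) := by
          gcongr with v
          · exact sum_nonneg fun s _ => hPQ s v
          · exact ih _
      _ = perOn (P * Q) (insert u U) V := by
          rw [perOn_eq_sum_row _ V (mem_insert_self u U), erase_insert hu]

end CauchyBinet

section Exchange

variable {γ δ : Type*} [DecidableEq γ] [DecidableEq δ] {M : Matrix γ δ ℝ}

lemma perOn_insert_insert {T : Finset γ} {S : Finset δ} {t : γ} {i : δ} (ht : t ∉ T)
    (hi : i ∉ S) :
    perOn M (insert t T) (insert i S)
      = M t i * perOn M T S + ∑ c ∈ S, M t c * perOn M T (insert i (S.erase c)) := by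
  rw [perOn_eq_sum_row M _ (mem_insert_self t T), erase_insert ht, sum_insert hi,
    erase_insert hi]
  congr 1
  refine sum_congr rfl fun c hc => ?_
  rw [erase_insert_of_ne (ne_of_mem_of_not_mem hc hi).symm]

/-- `colExchange` and `rowExchange_of_colExchange` are proved by a joint induction on `T`;
this predicate carries the induction hypothesis. -/
def ColExchange (M : Matrix γ δ ℝ) (T : Finset γ) : Prop :=
  ∀ (R : Finset γ) (C S : Finset δ) (c : δ), T ⊆ R → c ∉ C → S ⊆ C →
    perOn M R C * perOn M T (insert c S) ≤
      ∑ i ∈ C \ S, perOn M R (insert c (C.erase i)) * perOn M T (insert i S)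

lemma rowExchange_of_colExchange (hM : ∀ i j, 0 ≤ M i j) {T R : Finset γ} {C S : Finset δ}
    {t : γ} (hT : ColExchange M T) (ht : t ∉ T) (hR : insert t T ⊆ R) (hS : S ⊆ C) :
    perOn M R C * perOn M T S ≤
      ∑ i ∈ C \ S, perOn M (R.erase t) (C.erase i) * perOn M (insert t T) (insert i S) := by
  have hTR : T ⊆ R.erase t := subset_erase.2 ⟨(subset_insert t T).trans hR, ht⟩
  have hexchange : ∀ c ∈ S, perOn M (R.erase t) (C.erase c) * perOn M T S ≤
      ∑ i ∈ C \ S, perOn M (R.erase t) (C.erase i) * perOn M T (insert i (S.erase c)) := by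
    intro c hc
    have hsdiff : C.erase c \ S.erase c = C \ S := by
      ext x; by_cases x = c <;> simp_all
    have h := hT (R.erase t) (C.erase c) (S.erase c) c hTR (notMem_erase c C)
      (erase_subset_erase c hS)
    rw [insert_erase hc, hsdiff] at h
    refine h.trans_eq (sum_congr rfl fun i hi => ?_)
    have hic : c ≠ i := (ne_of_mem_of_not_mem hc (mem_sdiff.1 hi).2)
    rw [erase_right_comm, insert_erase (mem_erase.2 ⟨hic, hS hc⟩)]
  have hexpand : ∀ i ∈ C \ S,
      perOn M (R.erase t) (C.erase i) * perOn M (insert t T) (insert i S)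
        = M t i * perOn M (R.erase t) (C.erase i) * perOn M T S + ∑ c ∈ S,
            M t c * (perOn M (R.erase t) (C.erase i) * perOn M T (insert i (S.erase c))) := by
    intro i hi
    rw [perOn_insert_insert ht (mem_sdiff.1 hi).2, mul_add, mul_sum]
    congr 1
    · ring
    · exact sum_congr rfl fun c _ => by ring
  calc perOn M R C * perOn M T S
      = ∑ i ∈ C \ S, M t i * perOn M (R.erase t) (C.erase i) * perOn M T S
          + ∑ c ∈ S, M t c * (perOn M (R.erase t) (C.erase c) * perOn M T S) := by
        rw [perOn_eq_sum_row M C (hR (mem_insert_self t T)), sum_mul, ← sum_sdiff hS]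
        simp only [mul_assoc]
    _ ≤ ∑ i ∈ C \ S, M t i * perOn M (R.erase t) (C.erase i) * perOn M T S
          + ∑ c ∈ S, M t c * ∑ i ∈ C \ S,
              perOn M (R.erase t) (C.erase i) * perOn M T (insert i (S.erase c)) := by
        gcongr with c hc
        · exact hM t c
        · exact hexchange c hc
    _ = _ := by
        rw [sum_congr rfl hexpand, sum_add_distrib, sum_comm (s := C \ S) (t := S)]
        simp only [mul_sum]

lemma colExchange (hM : ∀ i j, 0 ≤ M i j) (T : Finset γ) : ColExchange M T := by
  induction T using Finset.strongInduction with
  | H T ih =>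
  intro R C S c hTR hc hS
  have hcS : c ∉ S := fun h => hc (hS h)
  calc perOn M R C * perOn M T (insert c S)
      = ∑ t ∈ T, M t c * (perOn M R C * perOn M (T.erase t) S) := by
        rw [perOn_eq_sum_col M T (mem_insert_self c S), erase_insert hcS, mul_sum]
        exact sum_congr rfl fun t _ => by ring
    _ ≤ ∑ t ∈ T, M t c * ∑ i ∈ C \ S,
          perOn M (R.erase t) (C.erase i) * perOn M T (insert i S) := by
        gcongr with t ht
        · exact hM t c
        · have h := rowExchange_of_colExchange hM (ih _ (erase_ssubset ht))
            (notMem_erase t T) (R := R) (by rwa [insert_erase ht]) hS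
          rwa [insert_erase ht] at h
    _ = ∑ i ∈ C \ S, (∑ t ∈ T, M t c * perOn M (R.erase t) (C.erase i))
          * perOn M T (insert i S) := by
        simp only [mul_sum, sum_mul]
        rw [sum_comm]
        exact sum_congr rfl fun i _ => sum_congr rfl fun t _ => by ring
    _ ≤ ∑ i ∈ C \ S, (∑ r ∈ R, M r c * perOn M (R.erase r) (C.erase i))
          * perOn M T (insert i S) := by
        gcongr with i
        · exact perOn_nonneg hM _ _
        · exact fun r _ _ => mul_nonneg (hM r c) (perOn_nonneg hM _ _)
    _ = ∑ i ∈ C \ S, perOn M R (insert c (C.erase i)) * perOn M T (insert i S) := by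
        refine sum_congr rfl fun i _ => ?_
        rw [perOn_eq_sum_col M R (mem_insert_self c _),
          erase_insert fun h => hc (mem_of_mem_erase h)]

end Exchange

section Jacobi

variable {γ : Type*} [DecidableEq γ] [Fintype γ] {M : Matrix γ γ ℝ}

noncomputable def perAdj (M : Matrix γ γ ℝ) : Matrix γ γ ℝ :=
  of fun i j => perOn M (univ.erase j) (univ.erase i)

lemma perAdj_nonneg (hM : ∀ i j, 0 ≤ M i j) (i j : γ) : 0 ≤ perAdj M i j :=
  perOn_nonneg hM _ _

lemma per_nonneg (hM : ∀ i j, 0 ≤ M i j) : 0 ≤ per M := by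
  rw [per_eq_perOn_univ]
  exact perOn_nonneg hM _ _

lemma perOn_compl_eq_zero_of_card_ne {S S' : Finset γ} (h : #S ≠ #S') :
    perOn M Sᶜ S'ᶜ = 0 := by
  refine perOn_eq_zero_of_card_ne ?_
  have := card_le_univ S
  have := card_le_univ S'
  rw [card_compl, card_compl]
  omega

lemma per_mul_perOn_le_sum (hM : ∀ i j, 0 ≤ M i j) {T T' : Finset γ} {j : γ} (hj : j ∉ T) :
    per M * perOn M T T' ≤ ∑ i ∈ T'ᶜ, perAdj M i j * perOn M (insert j T) (insert i T') := by
  rw [per_eq_perOn_univ, compl_eq_univ_sdiff]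
  exact rowExchange_of_colExchange hM (colExchange hM T) hj (subset_univ _) (subset_univ _)

lemma pow_card_mul_perOn_compl_le (hM : ∀ i j, 0 ≤ M i j) (S S' : Finset γ) :
    per M ^ #S * perOn M Sᶜ S'ᶜ ≤ per M * perOn (perAdj M) S' S := by
  induction S using Finset.induction_on generalizing S' with
  | empty =>
    by_cases hS' : S' = ∅
    · simp [hS', per_eq_perOn_univ]
    · rw [perOn_compl_eq_zero_of_card_ne (by simpa [eq_comm] using hS'), mul_zero]
      exact mul_nonneg (per_nonneg hM) (perOn_nonneg (perAdj_nonneg hM) _ _)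
  | @insert j S hj ih =>
    calc per M ^ #(insert j S) * perOn M (insert j S)ᶜ S'ᶜ
        = per M ^ #S * (per M * perOn M (insert j S)ᶜ S'ᶜ) := by
          rw [card_insert_of_notMem hj]
          ring
      _ ≤ per M ^ #S * ∑ i ∈ S', perAdj M i j * perOn M Sᶜ (S'.erase i)ᶜ := by
          refine mul_le_mul_of_nonneg_left ?_ (pow_nonneg (per_nonneg hM) _)
          have h := per_mul_perOn_le_sum hM (T' := S'ᶜ) (notMem_compl.2 (mem_insert_self j S))
          have hcompl : insert j (insert j S)ᶜ = Sᶜ := by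
            rw [compl_insert, insert_erase (mem_compl.2 hj)]
          rw [compl_compl, hcompl] at h
          exact h.trans_eq (sum_congr rfl fun i _ => by rw [compl_erase])
      _ = ∑ i ∈ S', perAdj M i j * (per M ^ #S * perOn M Sᶜ (S'.erase i)ᶜ) := by
          rw [mul_sum]
          exact sum_congr rfl fun i _ => by ring
      _ ≤ ∑ i ∈ S', perAdj M i j * (per M * perOn (perAdj M) (S'.erase i) S) :=
          sum_le_sum fun i _ => mul_le_mul_of_nonneg_left (ih _) (perAdj_nonneg hM i j)
      _ = per M * perOn (perAdj M) S' (insert j S) := by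
          rw [perOn_eq_sum_col _ S' (mem_insert_self j S), erase_insert hj, mul_sum]
          exact sum_congr rfl fun i _ => by ring

end Jacobi

lemma Fintype.sum_finset_sum_type {α β M : Type*} [AddCommMonoid M] [Fintype α] [Fintype β]
    (f : Finset (α ⊕ β) → M) :
    ∑ V, f V = ∑ V₁ : Finset α, ∑ V₂ : Finset β, f (V₁.disjSum V₂) := by
  rw [← Fintype.sum_prod_type']
  exact (Fintype.sum_equiv sumEquiv.toEquiv.symm _ _ fun _ => rfl).symm

section Blocks

variable {α β γ δ : Type*} [DecidableEq α] [DecidableEq β] [DecidableEq γ] [DecidableEq δ]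

lemma perOn_disjSum_cols (M : Matrix γ (α ⊕ β) ℝ) (R : Finset γ) (C₁ : Finset α)
    (C₂ : Finset β) :
    perOn M R (C₁.disjSum C₂) = ∑ T ∈ R.powerset,
      perOn (M.submatrix id Sum.inl) T C₁ * perOn (M.submatrix id Sum.inr) (R \ T) C₂ := by
  rw [perOn_eq_sum_powerset_cols M R (disjSum_mono subset_rfl (empty_subset C₂))]
  have hsdiff : C₁.disjSum C₂ \ C₁.disjSum ∅ = (∅ : Finset α).disjSum C₂ := by
    ext (x | x) <;> simp
  refine sum_congr rfl fun T _ => ?_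
  have h₁ := perOn_submatrix M (.refl γ) .inl T C₁
  have h₂ := perOn_submatrix M (.refl γ) .inr (R \ T) C₂
  rw [map_refl] at h₁ h₂
  rw [hsdiff, disjSum_empty, empty_disjSum, ← h₁, ← h₂]
  rfl

lemma perOn_disjSum_rows (M : Matrix (α ⊕ β) δ ℝ) (R₁ : Finset α) (R₂ : Finset β)
    (C : Finset δ) :
    perOn M (R₁.disjSum R₂) C = ∑ V ∈ C.powerset,
      perOn (M.submatrix Sum.inl id) R₁ V * perOn (M.submatrix Sum.inr id) R₂ (C \ V) := by
  rw [← perOn_transpose, perOn_disjSum_cols]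
  simp only [← transpose_submatrix, perOn_transpose]

end Blocks

section Expansions

variable {γ κ : Type*} [DecidableEq γ] [DecidableEq κ] [Fintype γ] [Fintype κ]

lemma per_fromBlocks_eq_sum (B : Matrix γ γ ℝ) (Y : Matrix γ κ ℝ) (X : Matrix κ γ ℝ)
    (W : Matrix κ κ ℝ) :
    per (fromBlocks B Y X W) = ∑ U : Finset κ, ∑ V : Finset κ,
      (∑ T' : Finset γ, ∑ T : Finset γ, perOn B T T' * perOn Y Tᶜ V * perOn X U T'ᶜ)
        * perOn W Uᶜ Vᶜ := by
  have hblocks : per (fromBlocks B Y X W) = ∑ T' : Finset γ, ∑ V : Finset κ,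
      (∑ T : Finset γ, perOn B T T' * perOn Y Tᶜ V)
        * ∑ U : Finset κ, perOn X U T'ᶜ * perOn W Uᶜ Vᶜ := by
    rw [per_eq_perOn_univ]
    refine (perOn_disjSum_rows _ univ univ univ).trans ?_
    rw [powerset_univ, Fintype.sum_finset_sum_type]
    refine sum_congr rfl fun T' _ => sum_congr rfl fun V _ => ?_
    have hcompl : univ \ T'.disjSum V = T'ᶜ.disjSum Vᶜ := by
      ext (x | x) <;> simp
    rw [hcompl, perOn_disjSum_cols, perOn_disjSum_cols, powerset_univ, powerset_univ]
    simp only [← compl_eq_univ_sdiff]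
    rfl
  rw [hblocks]
  simp only [mul_sum, sum_mul]
  refine ((sum_congr rfl fun T' _ => sum_comm).trans sum_comm).trans
    (sum_congr rfl fun U _ => sum_comm.trans (sum_congr rfl fun V _ =>
      sum_congr rfl fun T' _ => sum_congr rfl fun T _ => by ring))

lemma per_add_eq_sum (W N : Matrix κ κ ℝ) :
    per (W + N) = ∑ U : Finset κ, ∑ V : Finset κ, perOn N U V * perOn W Uᶜ Vᶜ := by
  have hmixed : ∀ U : Finset κ, ∑ σ : Equiv.Perm κ,
      (∏ i ∈ U, N i (σ i)) * ∏ i ∈ Uᶜ, W i (σ i)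
        = ∑ V : Finset κ, perOn N U V * perOn W Uᶜ Vᶜ := by
    intro U
    let Z : Matrix κ κ ℝ := of fun i j => if i ∈ U then N i j else W i j
    calc ∑ σ : Equiv.Perm κ, (∏ i ∈ U, N i (σ i)) * ∏ i ∈ Uᶜ, W i (σ i)
        = per Z := by
          refine sum_congr rfl fun σ _ => ?_
          rw [← prod_mul_prod_compl U]
          congr 1
          · exact prod_congr rfl fun i hi => by simp [Z, hi]
          · exact prod_congr rfl fun i hi => by simp [Z, mem_compl.1 hi]
      _ = ∑ V : Finset κ, perOn N U V * perOn W Uᶜ Vᶜ := by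
          rw [per_eq_perOn_univ, perOn_eq_sum_powerset_rows Z (subset_univ U), powerset_univ]
          simp only [← compl_eq_univ_sdiff]
          refine sum_congr rfl fun V _ => congr($(perOn_congr ?_) * $(perOn_congr ?_))
          · exact fun i hi j _ => by simp [Z, hi]
          · exact fun i hi j _ => by simp [Z, mem_compl.1 hi]
  simp only [per, Matrix.add_apply, add_comm (W _ _), Fintype.prod_add]
  rw [sum_comm]
  exact sum_congr rfl fun U _ => hmixed U

end Expansions

section Schur

variable {γ κ : Type*} [DecidableEq γ] [DecidableEq κ] [Fintype γ] {B : Matrix γ γ ℝ}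

lemma pow_card_mul_perOn_mul_perOn_compl_le (hB : ∀ i j, 0 ≤ B i j) {X : Matrix κ γ ℝ}
    (hX : ∀ i j, 0 ≤ X i j) (U : Finset κ) (S S' : Finset γ) :
    per B ^ #U * (perOn X U S' * perOn B Sᶜ S'ᶜ)
      ≤ per B * (perOn X U S' * perOn (perAdj B) S' S) := by
  by_cases hUS' : #U = #S'
  · by_cases hSS' : #S = #S'
    · rw [hUS', ← hSS', mul_left_comm, mul_left_comm (per B)]
      exact mul_le_mul_of_nonneg_left (pow_card_mul_perOn_compl_le hB S S')
        (perOn_nonneg hX _ _)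
    · rw [perOn_compl_eq_zero_of_card_ne hSS', mul_zero, mul_zero]
      exact mul_nonneg (per_nonneg hB)
        (mul_nonneg (perOn_nonneg hX _ _) (perOn_nonneg (perAdj_nonneg hB) _ _))
  · simp [perOn_eq_zero_of_card_ne hUS']

lemma pow_card_mul_sum_le_perOn_mul [Fintype κ] (hB : ∀ i j, 0 ≤ B i j) {X : Matrix κ γ ℝ}
    {Y : Matrix γ κ ℝ} (hX : ∀ i j, 0 ≤ X i j) (hY : ∀ i j, 0 ≤ Y i j) (U V : Finset κ) :
    per B ^ #U * ∑ T' : Finset γ, ∑ T : Finset γ, perOn B T T' * perOn Y Tᶜ V * perOn X U T'ᶜ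
      ≤ per B * perOn (X * perAdj B * Y) U V := by
  have hXadj : ∀ i j, 0 ≤ (X * perAdj B) i j := fun i j =>
    sum_nonneg fun k _ => mul_nonneg (hX i k) (perAdj_nonneg hB k j)
  calc per B ^ #U * ∑ T' : Finset γ, ∑ T : Finset γ,
        perOn B T T' * perOn Y Tᶜ V * perOn X U T'ᶜ
      = ∑ S' : Finset γ, ∑ S : Finset γ,
          per B ^ #U * (perOn X U S' * perOn B Sᶜ S'ᶜ) * perOn Y S V := by
        rw [mul_sum, ← Equiv.sum_comp (compl_involutive.toPerm _)]
        refine sum_congr rfl fun S' _ => ?_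
        rw [mul_sum, ← Equiv.sum_comp (compl_involutive.toPerm _)]
        refine sum_congr rfl fun S _ => ?_
        simp only [Function.Involutive.coe_toPerm, compl_compl]
        ring
    _ ≤ ∑ S' : Finset γ, ∑ S : Finset γ,
          per B * (perOn X U S' * perOn (perAdj B) S' S) * perOn Y S V :=
        sum_le_sum fun S' _ => sum_le_sum fun S _ => mul_le_mul_of_nonneg_right
          (pow_card_mul_perOn_mul_perOn_compl_le hB hX U S S') (perOn_nonneg hY _ _)
    _ = per B * ∑ S : Finset γ,
          (∑ S' : Finset γ, perOn X U S' * perOn (perAdj B) S' S) * perOn Y S V := by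
        rw [sum_comm, mul_sum]
        refine sum_congr rfl fun S _ => ?_
        rw [sum_mul, mul_sum]
        exact sum_congr rfl fun S' _ => by ring
    _ ≤ per B * ∑ S : Finset γ, perOn (X * perAdj B) U S * perOn Y S V := by
        gcongr with S
        · exact per_nonneg hB
        · exact perOn_nonneg hY _ _
        · exact sum_perOn_mul_perOn_le hX (perAdj_nonneg hB) U S
    _ ≤ per B * perOn (X * perAdj B * Y) U V := by
        gcongr
        · exact per_nonneg hB
        · exact sum_perOn_mul_perOn_le hXadj hY U V

theorem per_fromBlocks_le [Fintype κ] (B : Matrix γ γ ℝ) (Y : Matrix γ κ ℝ) (X : Matrix κ γ ℝ)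
    (W : Matrix κ κ ℝ) (hB : ∀ i j, 0 ≤ B i j) (hX : ∀ i j, 0 ≤ X i j)
    (hY : ∀ i j, 0 ≤ Y i j) (hW : ∀ i j, 0 ≤ W i j) (hper : 0 < per B) :
    per (fromBlocks B Y X W) ≤ per B * per (W + X * ((per B)⁻¹ • perAdj B) * Y) := by
  rw [per_fromBlocks_eq_sum, per_add_eq_sum, Matrix.mul_smul, Matrix.smul_mul, mul_sum]
  refine sum_le_sum fun U _ => ?_
  rw [mul_sum]
  refine sum_le_sum fun V _ => ?_
  rw [perOn_smul, ← mul_assoc]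
  refine mul_le_mul_of_nonneg_right ?_ (perOn_nonneg hW _ _)
  rw [mul_left_comm, inv_pow, ← div_eq_inv_mul, le_div_iff₀ (pow_pos hper _), mul_comm]
  exact pow_card_mul_sum_le_perOn_mul hB hX hY U V

end Schur

/-- Permanental Schur's formula: `per(A) ≤ per(B) · per(W + Xᵀ B* Y)`. -/
theorem stmt2 {d k : ℕ} (B : Matrix (Fin (d + 1)) (Fin (d + 1)) ℝ)
    (X Y : Matrix (Fin (d + 1)) (Fin k) ℝ) (W : Matrix (Fin k) (Fin k) ℝ)
    (hB : ∀ i j, 0 ≤ B i j) (hX : ∀ i j, 0 ≤ X i j) (hY : ∀ i j, 0 ≤ Y i j)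
    (hW : ∀ i j, 0 ≤ W i j) (hper : 0 < per B) :
    per (Matrix.fromBlocks B Y Xᵀ W) ≤ per B * per (W + Xᵀ * pinv B * Y) := by
  have hpinv : pinv B = (per B)⁻¹ • perAdj B := by
    ext i j
    simp [pinv, perAdj, per_submatrix_succAbove, div_eq_inv_mul]
  rw [hpinv]
  exact per_fromBlocks_le B Y Xᵀ W hB (fun i j => hX j i) hY hW hper
end

section
/- For any non-negative matrix B ∈ ℝ^{d×d}_{≥0}, non-negative vectors x₁, x₂, y₁, y₂ ∈ ℝ^d, and non-negative scalars w_{11}, w_{12}, w_{21}, w_{22}, the following inequality holds: per([[B, y₁, y₂],[x₁^T, w₁₁, w₁₂],[x₂^T, w₂₁, w₂₂]]) · per(B) ≤ per([[B, y₁],[x₁^T, w₁₁]]) · per([[B, y₂],[x₂^T, w₂₂]]) + per([[B, y₂],[x₁^T, w₁₂]]) · per([[B, y₁],[x₂^T, w₂₁]]). -/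
open Matrix BigOperators

/-- The `(d+1)×(d+1)` block matrix `[[B, y],[xᵀ, w]]`. -/
noncomputable def blk1 {d : ℕ} (B : Matrix (Fin d) (Fin d) ℝ) (x y : Fin d → ℝ) (w : ℝ) :
    Matrix (Fin d ⊕ Fin 1) (Fin d ⊕ Fin 1) ℝ :=
  Matrix.fromBlocks B (Matrix.of fun i (_ : Fin 1) => y i)
    (Matrix.of fun (_ : Fin 1) j => x j) (Matrix.of fun (_ : Fin 1) (_ : Fin 1) => w)

/-- The `(d+2)×(d+2)` block matrix `[[B, y₁, y₂],[x₁ᵀ, w₁₁, w₁₂],[x₂ᵀ, w₂₁, w₂₂]]`. -/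
noncomputable def blk2 {d : ℕ} (B : Matrix (Fin d) (Fin d) ℝ) (x₁ x₂ y₁ y₂ : Fin d → ℝ)
    (w₁₁ w₁₂ w₂₁ w₂₂ : ℝ) : Matrix (Fin d ⊕ Fin 2) (Fin d ⊕ Fin 2) ℝ :=
  Matrix.fromBlocks B
    (Matrix.of fun i j => if j = (0 : Fin 2) then y₁ i else y₂ i)
    (Matrix.of fun i j => if i = (0 : Fin 2) then x₁ j else x₂ j)
    !![w₁₁, w₁₂; w₂₁, w₂₂]

/-!
Both sides expand into sums over pairs of permutations. On the left, a pair `(σ, τ)` consists of a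
permutation `σ` of the big matrix and a permutation `τ` of `B`, extended by the identity on the two
border indices `a`, `b`. If `a` and `b` lie on different cycles of `σ τ⁻¹`, exchanging `σ` and `τ`
on the points that `τ` sends into the cycle of `b` yields a permutation fixing `b` and one fixing
`a` with the same product of entries, i.e. a term of
`per [[B, y₁],[x₁ᵀ, w₁₁]] · per [[B, y₂],[x₂ᵀ, w₂₂]]`.
If they lie on a common cycle, composing `σ` with the transposition of `a` and `b` first splits
that cycle and swaps the two border columns, so the same exchange lands in the cross term.
Both maps are injective and all terms are nonnegative.
-/

open Equiv Equiv.Perm Finset Function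

namespace Equiv.Perm

variable {ι : Type*} [Fintype ι] [DecidableEq ι]

theorem not_sameCycle_swap_mul {f : Perm ι} {x y : ι} (hxy : x ≠ y) (h : f.SameCycle x y) :
    ¬ (swap x y * f).SameCycle x y := by
  have hex : ∃ k, (f ^ k) x = y := h.exists_nat_pow_eq
  set k := Nat.find hex
  have hk : (f ^ k) x = y := Nat.find_spec hex
  have hmin : ∀ j < k, (f ^ j) x ≠ y := fun j hj => Nat.find_min hex hj
  have hk0 : 0 < k := Nat.pos_of_ne_zero fun h0 => hxy (by simpa [h0] using hk)
  have hret : ∀ j, 0 < j → j < k → (f ^ j) x ≠ x := fun j hj0 hjk hfx => by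
    refine hmin (k - j) (by omega) ?_
    rw [← hfx, ← mul_apply, ← pow_add, Nat.sub_add_cancel hjk.le, hk]
  -- the arc `x, f x, …, f^(k-1) x` is closed under `swap x y * f` and misses `y`
  have hstep : ∀ j < k, ∃ j' < k, (f ^ j') x = (swap x y * f) ((f ^ j) x) := by
    intro j hj
    rw [mul_apply, ← mul_apply f, ← pow_succ']
    rcases (show j + 1 ≤ k from hj).lt_or_eq with hlt | heq
    · exact ⟨j + 1, hlt, (swap_apply_of_ne_of_ne (hret _ j.succ_pos hlt) (hmin _ hlt)).symm⟩
    · exact ⟨0, hk0, by rw [heq, hk, swap_apply_right, pow_zero, one_apply]⟩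
  have horbit : ∀ n : ℕ, ∃ j < k, (f ^ j) x = ((swap x y * f) ^ n) x := by
    intro n
    induction n with
    | zero => exact ⟨0, hk0, rfl⟩
    | succ n ih =>
      obtain ⟨j, hj, hfj⟩ := ih
      rw [pow_succ', mul_apply, ← hfj]
      exact hstep j hj
  intro hg
  obtain ⟨n, hn⟩ := hg.exists_nat_pow_eq
  obtain ⟨j, hj, hfj⟩ := horbit n
  exact hmin j hj (hfj.trans hn)

theorem commute_cycleOf_self (f : Perm ι) (x : ι) : Commute (f.cycleOf x) f := by
  ext y
  simp only [Perm.mul_apply, cycleOf_apply, sameCycle_apply_right]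
  split_ifs <;> rfl

theorem cycleOf_cycleOf_mul_inv_mul (f : Perm ι) (x : ι) :
    (f.cycleOf x * f⁻¹ * f.cycleOf x).cycleOf x = f.cycleOf x := by
  rw [mul_assoc, cycleOf_mul_of_apply_right_eq_self
    ((commute_cycleOf_self f x).inv_right.mul_right (Commute.refl _))]
  · by_cases hx : f x = x
    · rw [(cycleOf_eq_one_iff f).mpr hx, cycleOf_one]
    · exact (isCycle_cycleOf f hx).cycleOf_eq (by rwa [cycleOf_apply_self])
  · simp

/-- `σ` and `τ` exchanged on the points that `τ` sends into the cycle of `b` under `σ * τ⁻¹`. -/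
def cycleExchange (b : ι) (σ τ : Perm ι) : Perm ι × Perm ι :=
  (((σ * τ⁻¹).cycleOf b)⁻¹ * σ, (σ * τ⁻¹).cycleOf b * τ)

variable {b : ι} {σ τ : Perm ι}

theorem cycleExchange_apply (i : ι) :
    ((cycleExchange b σ τ).1 i = τ i ∧ (cycleExchange b σ τ).2 i = σ i) ∨
      ((cycleExchange b σ τ).1 i = σ i ∧ (cycleExchange b σ τ).2 i = τ i) := by
  have hσ : σ i = (σ * τ⁻¹) (τ i) := by simp
  simp only [cycleExchange, Perm.mul_apply, inv_eq_iff_eq]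
  rw [hσ]
  by_cases h : (σ * τ⁻¹).SameCycle b (τ i)
  · exact Or.inl ⟨h.cycleOf_apply.symm, h.cycleOf_apply⟩
  · have h' : ¬ (σ * τ⁻¹).SameCycle b ((σ * τ⁻¹) (τ i)) := by rwa [sameCycle_apply_right]
    exact Or.inr ⟨(cycleOf_apply_of_not_sameCycle h').symm, cycleOf_apply_of_not_sameCycle h⟩

theorem cycleOf_cycleExchange :
    ((cycleExchange b σ τ).2 * (cycleExchange b σ τ).1⁻¹).cycleOf b = (σ * τ⁻¹).cycleOf b := by
  rw [← cycleOf_cycleOf_mul_inv_mul (σ * τ⁻¹) b]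
  simp only [cycleExchange, _root_.mul_inv_rev, inv_inv, mul_assoc]

theorem cycleExchange_injective (b : ι) :
    Injective fun p : Perm ι × Perm ι => cycleExchange b p.1 p.2 := by
  rintro ⟨σ, τ⟩ ⟨σ', τ'⟩ h
  have hP : (σ * τ⁻¹).cycleOf b = (σ' * τ'⁻¹).cycleOf b := by
    simpa only [cycleOf_cycleExchange] using
      congrArg (fun q : Perm ι × Perm ι => (q.2 * q.1⁻¹).cycleOf b) h
  simp only [cycleExchange, Prod.mk.injEq, hP] at h
  exact Prod.ext (mul_left_cancel h.1) (mul_left_cancel h.2)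

theorem cycleExchange_fst_apply_self (hb : τ b = b) : (cycleExchange b σ τ).1 b = b := by
  simp [cycleExchange, Equiv.symm_apply_eq, Equiv.eq_symm_apply, hb]

theorem cycleExchange_snd_apply_of_not_sameCycle {a : ι} (ha : τ a = a)
    (h : ¬ (σ * τ⁻¹).SameCycle b a) : (cycleExchange b σ τ).2 a = a := by
  simp [cycleExchange, ha, cycleOf_apply_of_not_sameCycle h]

theorem prod_cycleExchange {R : Type*} [CommMonoid R] (N : Matrix ι ι R) {a : ι} (hab : a ≠ b)
    (ha : τ a = a) (hb : τ b = b) (h : ¬ (σ * τ⁻¹).SameCycle b a) :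
    (∏ i ∈ {b}ᶜ, N i ((cycleExchange b σ τ).1 i)) * ∏ i ∈ {a}ᶜ, N i ((cycleExchange b σ τ).2 i) =
      (∏ i, N i (σ i)) * ∏ i ∈ {a, b}ᶜ, N i (τ i) := by
  set α := (cycleExchange b σ τ).1
  set β := (cycleExchange b σ τ).2
  have hαb : α b = b := cycleExchange_fst_apply_self hb
  have hβa : β a = a := cycleExchange_snd_apply_of_not_sameCycle ha h
  have hsplit := fun i => cycleExchange_apply (b := b) (σ := σ) (τ := τ) i
  have hαa : α a = σ a := by
    rcases hsplit a with ⟨h1, h2⟩ | ⟨h1, -⟩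
    · exact h1.trans (ha.trans (hβa.symm.trans h2))
    · exact h1
  have hβb : β b = σ b := by
    rcases hsplit b with ⟨-, h2⟩ | ⟨h1, h2⟩
    · exact h2
    · exact h2.trans (hb.trans (hαb.symm.trans h1))
  have hrow : ∀ i, N i (α i) * N i (β i) = N i (σ i) * N i (τ i) := fun i => by
    rcases hsplit i with ⟨h1, h2⟩ | ⟨h1, h2⟩ <;>
      simp only [α, β, h1, h2, mul_comm]
  have hb' : {a, b}ᶜ = ({b}ᶜ : Finset ι).erase a := by ext; simp
  have ha' : {a, b}ᶜ = ({a}ᶜ : Finset ι).erase b := by ext; simp [and_comm]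
  rw [← mul_prod_erase _ _ (by simpa using hab), ← mul_prod_erase {a}ᶜ _ (by simpa using hab.symm),
    ← prod_mul_prod_compl {a, b}, prod_pair hab, ← hb', ← ha', hαa, hβb]
  rw [mul_mul_mul_comm, ← prod_mul_distrib, prod_congr rfl fun i _ => hrow i, prod_mul_distrib]
  simp only [mul_assoc]

end Equiv.Perm

section PermanentMinors

variable {ι : Type*} [Fintype ι] [DecidableEq ι]

/-- The permanent of `N` with the rows and columns in `S` deleted. -/
noncomputable def perDelete (N : Matrix ι ι ℝ) (S : Finset ι) : ℝ :=
  ∑ σ : Perm ι with ∀ i ∈ S, σ i = i, ∏ i ∈ Sᶜ, N i (σ i)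

theorem per_submatrix_eq_perDelete {κ : Type*} [Fintype κ] [DecidableEq κ] (N : Matrix ι ι ℝ)
    (S : Finset ι) {f : κ → ι} (hf : Injective f) (hS : ∀ i, i ∉ S ↔ i ∈ Set.range f) :
    per (N.submatrix f f) = perDelete N S := by
  let e : κ ≃ {i // i ∉ S} :=
    (Equiv.ofInjective f hf).trans (Equiv.subtypeEquivRight fun i => (hS i).symm)
  let E : Perm κ ≃ {g : Perm ι // ∀ i, ¬ i ∉ S → g i = i} :=
    e.permCongr.trans (Perm.subtypeEquivSubtypePerm _)
  have hE : ∀ π k, (E π : Perm ι) (e k) = e (π k) := fun π k => by simp [E]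
  rw [per, perDelete, sum_subtype _ (p := fun g : Perm ι => ∀ i, ¬ i ∉ S → g i = i) (by simp)]
  refine Fintype.sum_equiv E _ _ fun π => ?_
  rw [prod_subtype Sᶜ (p := (· ∉ S)) (by simp), ← e.prod_comp]
  simp only [hE]
  rfl

theorem sum_le_perDelete_mul_perDelete {N : Matrix ι ι ℝ} (hN : ∀ i j, 0 ≤ N i j) {a b : ι}
    (hab : a ≠ b) (T : Finset (Perm ι × Perm ι))
    (hT : ∀ p ∈ T, p.2 a = a ∧ p.2 b = b ∧ ¬ (p.1 * p.2⁻¹).SameCycle b a) :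
    ∑ p ∈ T, (∏ i, N i (p.1 i)) * ∏ i ∈ {a, b}ᶜ, N i (p.2 i) ≤
      perDelete N {b} * perDelete N {a} := by
  rw [perDelete, perDelete, sum_mul_sum, ← sum_product']
  calc ∑ p ∈ T, (∏ i, N i (p.1 i)) * ∏ i ∈ {a, b}ᶜ, N i (p.2 i)
      = ∑ q ∈ T.image fun p => cycleExchange b p.1 p.2,
          (∏ i ∈ {b}ᶜ, N i (q.1 i)) * ∏ i ∈ {a}ᶜ, N i (q.2 i) := by
        rw [sum_image fun p _ q _ h => cycleExchange_injective b h]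
        refine sum_congr rfl fun p hp => ?_
        obtain ⟨ha, hb, h⟩ := hT p hp
        exact (prod_cycleExchange N hab ha hb h).symm
    _ ≤ _ := by
        refine sum_le_sum_of_subset_of_nonneg ?_ fun q _ _ => ?_
        · intro q hq
          obtain ⟨p, hp, rfl⟩ := mem_image.mp hq
          obtain ⟨ha, hb, h⟩ := hT p hp
          simp [cycleExchange_fst_apply_self hb, cycleExchange_snd_apply_of_not_sameCycle ha h]
        · exact mul_nonneg (prod_nonneg fun i _ => hN _ _) (prod_nonneg fun i _ => hN _ _)

theorem per_mul_perDelete_pair_le {N : Matrix ι ι ℝ} (hN : ∀ i j, 0 ≤ N i j) {a b : ι}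
    (hab : a ≠ b) :
    per N * perDelete N {a, b} ≤ perDelete N {b} * perDelete N {a} +
      perDelete (N.submatrix id (swap a b)) {b} * perDelete (N.submatrix id (swap a b)) {a} := by
  set N' := N.submatrix id (swap a b)
  set T : Finset (Perm ι × Perm ι) :=
    univ ×ˢ univ.filter fun τ : Perm ι => ∀ i ∈ ({a, b} : Finset ι), τ i = i
  have hT : ∀ p ∈ T, p.2 a = a ∧ p.2 b = b := by simp [T]
  have hlhs : per N * perDelete N {a, b} =
      ∑ p ∈ T, (∏ i, N i (p.1 i)) * ∏ i ∈ {a, b}ᶜ, N i (p.2 i) := by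
    rw [per, perDelete, sum_mul_sum, ← sum_product']
  rw [hlhs, ← sum_filter_not_add_sum_filter T fun p => (p.1 * p.2⁻¹).SameCycle b a]
  refine add_le_add (sum_le_perDelete_mul_perDelete hN hab _ fun p hp => ?_) ?_
  · rw [mem_filter] at hp
    exact ⟨(hT p hp.1).1, (hT p hp.1).2, hp.2⟩
  -- here `a` and `b` share a cycle of `σ * τ⁻¹`, which composing with `swap a b` splits
  calc ∑ p ∈ T with (p.1 * p.2⁻¹).SameCycle b a, (∏ i, N i (p.1 i)) * ∏ i ∈ {a, b}ᶜ, N i (p.2 i)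
      = ∑ p ∈ (T.filter fun p => (p.1 * p.2⁻¹).SameCycle b a).image fun p => (swap a b * p.1, p.2),
          (∏ i, N' i (p.1 i)) * ∏ i ∈ {a, b}ᶜ, N' i (p.2 i) := by
        rw [sum_image fun p _ q _ h => Prod.ext_iff.mpr (by simpa using h)]
        refine sum_congr rfl fun p hp => ?_
        obtain ⟨ha, hb⟩ := hT p (mem_filter.mp hp).1
        congr 1
        · simp [N']
        · refine prod_congr rfl fun i hi => ?_
          simp only [mem_compl, mem_insert, mem_singleton, not_or] at hi
          simp only [N', submatrix_apply, id]
          rw [swap_apply_of_ne_of_ne (fun h => hi.1 (p.2.injective (h.trans ha.symm)))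
            (fun h => hi.2 (p.2.injective (h.trans hb.symm)))]
    _ ≤ _ := by
        refine sum_le_perDelete_mul_perDelete (fun i j => hN _ _) hab _ fun q hq => ?_
        obtain ⟨p, hp, rfl⟩ := mem_image.mp hq
        obtain ⟨hpT, hsc⟩ := mem_filter.mp hp
        refine ⟨(hT p hpT).1, (hT p hpT).2, ?_⟩
        show ¬ (swap a b * p.1 * p.2⁻¹).SameCycle b a
        rw [mul_assoc, Equiv.swap_comm]
        exact not_sameCycle_swap_mul hab.symm hsc

end PermanentMinors

theorem perDelete_inr_eq_per_submatrix {κ : Type*} [Fintype κ] [DecidableEq κ]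
    (N : Matrix (κ ⊕ Fin 2) (κ ⊕ Fin 2) ℝ) {j k : Fin 2} (hjk : j ≠ k) :
    perDelete N {.inr k} =
      per (N.submatrix (Sum.map id fun _ : Fin 1 => j) (Sum.map id fun _ => j)) := by
  refine (per_submatrix_eq_perDelete _ _ (Sum.map_injective.mpr
    ⟨injective_id, fun _ _ _ => Subsingleton.elim _ _⟩) fun i => ?_).symm
  rcases i with r | m
  · simp
  · fin_cases j <;> fin_cases k <;> fin_cases m <;> simp_all

section BlockMatrices

variable {d : ℕ} (B : Matrix (Fin d) (Fin d) ℝ) (x₁ x₂ y₁ y₂ : Fin d → ℝ) (w₁₁ w₁₂ w₂₁ w₂₂ : ℝ)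

theorem blk2_nonneg (hB : ∀ i j, 0 ≤ B i j) (hx₁ : ∀ i, 0 ≤ x₁ i) (hx₂ : ∀ i, 0 ≤ x₂ i)
    (hy₁ : ∀ i, 0 ≤ y₁ i) (hy₂ : ∀ i, 0 ≤ y₂ i) (hw₁₁ : 0 ≤ w₁₁) (hw₁₂ : 0 ≤ w₁₂)
    (hw₂₁ : 0 ≤ w₂₁) (hw₂₂ : 0 ≤ w₂₂) : ∀ i j, 0 ≤ blk2 B x₁ x₂ y₁ y₂ w₁₁ w₁₂ w₂₁ w₂₂ i j := by
  rintro (r | i) (c | j) <;> try fin_cases i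
  all_goals try fin_cases j
  all_goals simp [blk2, *]

theorem perDelete_blk2_pair :
    perDelete (blk2 B x₁ x₂ y₁ y₂ w₁₁ w₁₂ w₂₁ w₂₂) {.inr 0, .inr 1} = per B := by
  refine (per_submatrix_eq_perDelete _ _ Sum.inl_injective fun i => ?_).symm
  rcases i with r | j
  · simp
  · fin_cases j <;> simp

theorem blk2_submatrix_zero :
    (blk2 B x₁ x₂ y₁ y₂ w₁₁ w₁₂ w₂₁ w₂₂).submatrix (Sum.map id fun _ => 0) (Sum.map id fun _ => 0) =
      blk1 B x₁ y₁ w₁₁ := by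
  ext (r | _) (c | _) <;> simp [blk1, blk2]

theorem blk2_submatrix_one :
    (blk2 B x₁ x₂ y₁ y₂ w₁₁ w₁₂ w₂₁ w₂₂).submatrix (Sum.map id fun _ => 1) (Sum.map id fun _ => 1) =
      blk1 B x₂ y₂ w₂₂ := by
  ext (r | _) (c | _) <;> simp [blk1, blk2]

theorem blk2_swap_submatrix_zero :
    ((blk2 B x₁ x₂ y₁ y₂ w₁₁ w₁₂ w₂₁ w₂₂).submatrix id (swap (.inr 0) (.inr 1))).submatrix
      (Sum.map id fun _ => 0) (Sum.map id fun _ => 0) = blk1 B x₁ y₂ w₁₂ := by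
  ext (r | _) (c | _) <;> simp [blk1, blk2, swap_apply_of_ne_of_ne]

theorem blk2_swap_submatrix_one :
    ((blk2 B x₁ x₂ y₁ y₂ w₁₁ w₁₂ w₂₁ w₂₂).submatrix id (swap (.inr 0) (.inr 1))).submatrix
      (Sum.map id fun _ => 1) (Sum.map id fun _ => 1) = blk1 B x₂ y₁ w₂₁ := by
  ext (r | _) (c | _) <;> simp [blk1, blk2, swap_apply_of_ne_of_ne]

end BlockMatrices

theorem stmt5 {d : ℕ} (B : Matrix (Fin d) (Fin d) ℝ) (x₁ x₂ y₁ y₂ : Fin d → ℝ)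
    (w₁₁ w₁₂ w₂₁ w₂₂ : ℝ)
    (hB : ∀ i j, 0 ≤ B i j) (hx₁ : ∀ i, 0 ≤ x₁ i) (hx₂ : ∀ i, 0 ≤ x₂ i)
    (hy₁ : ∀ i, 0 ≤ y₁ i) (hy₂ : ∀ i, 0 ≤ y₂ i)
    (hw₁₁ : 0 ≤ w₁₁) (hw₁₂ : 0 ≤ w₁₂) (hw₂₁ : 0 ≤ w₂₁) (hw₂₂ : 0 ≤ w₂₂) :
    per (blk2 B x₁ x₂ y₁ y₂ w₁₁ w₁₂ w₂₁ w₂₂) * per B ≤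
      per (blk1 B x₁ y₁ w₁₁) * per (blk1 B x₂ y₂ w₂₂) +
        per (blk1 B x₁ y₂ w₁₂) * per (blk1 B x₂ y₁ w₂₁) := by
  have key := per_mul_perDelete_pair_le
    (blk2_nonneg B x₁ x₂ y₁ y₂ w₁₁ w₁₂ w₂₁ w₂₂ hB hx₁ hx₂ hy₁ hy₂ hw₁₁ hw₁₂ hw₂₁ hw₂₂)
    (a := .inr 0) (b := .inr 1) (by simp)
  rwa [perDelete_blk2_pair, perDelete_inr_eq_per_submatrix _ (j := 0) (k := 1) (by decide),
    perDelete_inr_eq_per_submatrix _ (j := 0) (k := 1) (by decide),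
    perDelete_inr_eq_per_submatrix _ (j := 1) (k := 0) (by decide),
    perDelete_inr_eq_per_submatrix _ (j := 1) (k := 0) (by decide), blk2_submatrix_zero,
    blk2_submatrix_one, blk2_swap_submatrix_zero, blk2_swap_submatrix_one] at key
end

section
/- For any matrix B ∈ ℝ^{d×d}, vectors x₁, x₂, y₁, y₂ ∈ ℝ^d, and scalars w_{11}, w_{12}, w_{21}, w_{22}, the determinant identity holds: det([[B, y₁, y₂],[x₁^T, w₁₁, w₁₂],[x₂^T, w₂₁, w₂₂]]) · det(B) = det([[B, y₁],[x₁^T, w₁₁]]) · det([[B, y₂],[x₂^T, w₂₂]]) − det([[B, y₂],[x₁^T, w₁₂]]) · det([[B, y₁],[x₂^T, w₂₁]]). -/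
open Matrix BigOperators

namespace Matrix

variable {n 𝕜 X : Type*} [Fintype n] [DecidableEq n]

theorem dense_setOf_isUnit_det_add_smul_one [NontriviallyNormedField 𝕜] [CompleteSpace 𝕜]
    (A : Matrix n n 𝕜) : Dense {t : 𝕜 | IsUnit (A + t • 1).det} := by
  refine ((finite_spectrum (-A)).countable.dense_compl 𝕜).mono fun t ht => ?_
  rwa [Set.mem_compl_iff, spectrum.mem_iff, not_not, Algebra.algebraMap_eq_smul_one,
    sub_neg_eq_add, add_comm, isUnit_iff_isUnit_det] at ht

theorem eq_of_continuous_of_forall_isUnit_det [NontriviallyNormedField 𝕜] [CompleteSpace 𝕜]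
    [TopologicalSpace X] [T2Space X] {f g : Matrix n n 𝕜 → X}
    (hf : Continuous f) (hg : Continuous g) (h : ∀ A, IsUnit A.det → f A = g A)
    (A : Matrix n n 𝕜) : f A = g A := by
  have hline : Continuous fun t : 𝕜 => A + t • (1 : Matrix n n 𝕜) := by fun_prop
  have := Continuous.ext_on (dense_setOf_isUnit_det_add_smul_one A) (hf.comp hline)
    (hg.comp hline) fun t ht => h _ ht
  simpa using congrFun this 0

end Matrix

section Invertible

variable {d : ℕ} (B : Matrix (Fin d) (Fin d) ℝ) [Invertible B]

theorem det_blk1_of_invertible (x y : Fin d → ℝ) (w : ℝ) :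
    (blk1 B x y w).det = B.det * (w - (x ᵥ* ⅟B) ⬝ᵥ y) := by
  rw [blk1, det_fromBlocks₁₁, det_fin_one]
  simp [mul_apply, dotProduct, vecMul]

theorem det_blk2_of_invertible (x₁ x₂ y₁ y₂ : Fin d → ℝ) (w₁₁ w₁₂ w₂₁ w₂₂ : ℝ) :
    (blk2 B x₁ x₂ y₁ y₂ w₁₁ w₁₂ w₂₁ w₂₂).det = B.det *
      ((w₁₁ - (x₁ ᵥ* ⅟B) ⬝ᵥ y₁) * (w₂₂ - (x₂ ᵥ* ⅟B) ⬝ᵥ y₂) -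
        (w₁₂ - (x₁ ᵥ* ⅟B) ⬝ᵥ y₂) * (w₂₁ - (x₂ ᵥ* ⅟B) ⬝ᵥ y₁)) := by
  rw [blk2, det_fromBlocks₁₁, det_fin_two]
  simp [mul_apply, dotProduct, vecMul]

end Invertible

theorem continuous_det_blk1 {d : ℕ} (x y : Fin d → ℝ) (w : ℝ) :
    Continuous fun B : Matrix (Fin d) (Fin d) ℝ => (blk1 B x y w).det :=
  (continuous_id.matrix_fromBlocks continuous_const continuous_const continuous_const).matrix_det

theorem continuous_det_blk2 {d : ℕ} (x₁ x₂ y₁ y₂ : Fin d → ℝ) (w₁₁ w₁₂ w₂₁ w₂₂ : ℝ) :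
    Continuous fun B : Matrix (Fin d) (Fin d) ℝ => (blk2 B x₁ x₂ y₁ y₂ w₁₁ w₁₂ w₂₁ w₂₂).det :=
  (continuous_id.matrix_fromBlocks continuous_const continuous_const continuous_const).matrix_det

/-- Desnanot–Jacobi / Dodgson condensation style determinant identity. -/
theorem stmt6 {d : ℕ} (B : Matrix (Fin d) (Fin d) ℝ) (x₁ x₂ y₁ y₂ : Fin d → ℝ)
    (w₁₁ w₁₂ w₂₁ w₂₂ : ℝ) :
    (blk2 B x₁ x₂ y₁ y₂ w₁₁ w₁₂ w₂₁ w₂₂).det * B.det =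
      (blk1 B x₁ y₁ w₁₁).det * (blk1 B x₂ y₂ w₂₂).det -
        (blk1 B x₁ y₂ w₁₂).det * (blk1 B x₂ y₁ w₂₁).det := by
  refine Matrix.eq_of_continuous_of_forall_isUnit_det
    (f := fun A => (blk2 A x₁ x₂ y₁ y₂ w₁₁ w₁₂ w₂₁ w₂₂).det * A.det)
    (g := fun A => (blk1 A x₁ y₁ w₁₁).det * (blk1 A x₂ y₂ w₂₂).det -
      (blk1 A x₁ y₂ w₁₂).det * (blk1 A x₂ y₁ w₂₁).det) ?_ ?_ (fun A hA => ?_) B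
  · exact (continuous_det_blk2 ..).mul continuous_id.matrix_det
  · exact ((continuous_det_blk1 ..).mul (continuous_det_blk1 ..)).sub
      ((continuous_det_blk1 ..).mul (continuous_det_blk1 ..))
  · have := A.invertibleOfIsUnitDet hA
    simp only [det_blk1_of_invertible, det_blk2_of_invertible]
    ring
end

section
/- Let W ∈ ℝ^{k×k}_{≥0}, x, y ∈ ℝ^k_{≥0}, and b > 0. Define C ∈ ℝ^{k×k} by c_{i,j} = w_{i,j} + x_i y_j / b. Then per([[b, y^T],[x, W]]) ≤ b · per(C). -/
open Matrix BigOperators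

open Finset in
lemma aux_prod_add {α : Type*} [DecidableEq α] (s : Finset α) (f g : α → ℝ)
    (hf : ∀ i ∈ s, 0 ≤ f i) (hg : ∀ i ∈ s, 0 ≤ g i) :
    (∏ i ∈ s, f i) + ∑ i ∈ s, g i * ∏ l ∈ s.erase i, f l ≤ ∏ i ∈ s, (f i + g i) := by
  classical
  induction s using Finset.induction_on with
  | empty => simp
  | @insert a s ha ih =>
    have hfa : 0 ≤ f a := hf a (mem_insert_self _ _)
    have hga : 0 ≤ g a := hg a (mem_insert_self _ _)
    have hf' : ∀ i ∈ s, 0 ≤ f i := fun i hi => hf i (mem_insert_of_mem hi)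
    have hg' : ∀ i ∈ s, 0 ≤ g i := fun i hi => hg i (mem_insert_of_mem hi)
    have ih' := ih hf' hg'
    rw [prod_insert ha, prod_insert ha, sum_insert ha, erase_insert ha]
    have hsum : ∑ i ∈ s, g i * ∏ l ∈ (insert a s).erase i, f l
        = ∑ i ∈ s, g i * (f a * ∏ l ∈ s.erase i, f l) := by
      refine sum_congr rfl fun i hi => ?_
      have hia : i ≠ a := fun h => ha (h ▸ hi)
      rw [Finset.erase_insert_of_ne hia.symm,
        prod_insert (fun h => ha (Finset.erase_subset _ _ h))]
    rw [hsum]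
    have h1 : ∏ i ∈ s, f i ≤ ∏ i ∈ s, (f i + g i) :=
      Finset.prod_le_prod hf' (fun i hi => le_add_of_nonneg_right (hg' i hi))
    have h2 : ∑ i ∈ s, g i * (f a * ∏ l ∈ s.erase i, f l)
        = f a * ∑ i ∈ s, g i * ∏ l ∈ s.erase i, f l := by
      rw [mul_sum]; exact sum_congr rfl fun i _ => by ring
    rw [h2]
    have h3 := mul_le_mul_of_nonneg_left ih' hfa
    have h4 := mul_le_mul_of_nonneg_left h1 hga
    nlinarith [h3, h4]

def sumOptEquiv (k : ℕ) : (Fin 1 ⊕ Fin k) ≃ Option (Fin k) where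
  toFun := Sum.elim (fun _ => none) some
  invFun := fun o => o.elim (Sum.inl 0) Sum.inr
  left_inv := by rintro (i | j)
                 · simp [Subsingleton.elim (0 : Fin 1) i]
                 · rfl
  right_inv := by rintro (_ | j) <;> rfl

open Finset in
lemma per_block {k : ℕ} (W : Matrix (Fin k) (Fin k) ℝ) (x y : Fin k → ℝ) (b : ℝ) :
    per (Matrix.fromBlocks (Matrix.of fun (_ : Fin 1) (_ : Fin 1) => b)
        (Matrix.of fun (_ : Fin 1) j => y j) (Matrix.of fun i (_ : Fin 1) => x i) W)
    = ∑ τ : Equiv.Perm (Fin k), (b * ∏ l, W l (τ l)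
        + ∑ i, y (τ i) * x i * ∏ l ∈ Finset.univ.erase i, W l (τ l)) := by
  classical
  set M := Matrix.fromBlocks (Matrix.of fun (_ : Fin 1) (_ : Fin 1) => b)
      (Matrix.of fun (_ : Fin 1) j => y j) (Matrix.of fun i (_ : Fin 1) => x i) W with hM
  set e := sumOptEquiv k with he
  have step1 : per M = ∑ p : Option (Fin k) × Equiv.Perm (Fin k),
      ∏ i, M i (e.symm ((Equiv.Perm.decomposeOption.symm p) (e i))) := by
    rw [per]
    rw [Fintype.sum_equiv (Equiv.permCongr e)
      (fun σ => ∏ i, M i (σ i))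
      (fun σ' => ∏ i, M i (e.symm (σ' (e i)))) (fun σ => by simp)]
    exact Fintype.sum_equiv Equiv.Perm.decomposeOption _ _ (fun σ => by simp)
  rw [step1, Fintype.sum_prod_type, Fintype.sum_option, Finset.sum_add_distrib]
  congr 1
  · -- o = none case
    refine Finset.sum_congr rfl fun τ _ => ?_
    rw [Fintype.prod_sum_type, Fin.prod_univ_one]
    have h0 : ∀ z : Option (Fin k),
        (Equiv.Perm.decomposeOption.symm ((none : Option (Fin k)), τ)) z = z.map τ := by
      intro z; simp [Equiv.Perm.decomposeOption_symm_apply]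
    simp only [h0]
    simp [hM, he, sumOptEquiv]
  · -- o = some i case
    rw [Finset.sum_comm]
    refine Finset.sum_congr rfl fun τ _ => ?_
    rw [Fintype.sum_equiv τ (fun i => y (τ i) * x i * ∏ l ∈ Finset.univ.erase i, W l (τ l))
      (fun j => y j * x (τ.symm j) * ∏ l ∈ Finset.univ.erase (τ.symm j), W l (τ l))
      (fun i => by simp)]
    refine Finset.sum_congr rfl fun j _ => ?_
    rw [Fintype.prod_sum_type, Fin.prod_univ_one]
    have h0 : ∀ z : Option (Fin k),
        (Equiv.Perm.decomposeOption.symm ((some j : Option (Fin k)), τ)) z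
          = Equiv.swap none (some j) (z.map τ) := by
      intro z; simp [Equiv.Perm.decomposeOption_symm_apply]
    simp only [h0]
    have he1 : e (Sum.inl (0 : Fin 1)) = none := rfl
    have he2 : ∀ l : Fin k, e (Sum.inr l) = some l := fun _ => rfl
    simp only [he1, he2]
    have hfirst : M (Sum.inl 0) (e.symm (Equiv.swap none (some j) (Option.map τ none))) = y j := by
      simp [hM, he, sumOptEquiv]
    rw [hfirst]
    rw [← Finset.mul_prod_erase Finset.univ
      (fun l => M (Sum.inr l) (e.symm (Equiv.swap none (some j) (Option.map τ (some l)))))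
      (Finset.mem_univ (τ.symm j))]
    have hl0 : M (Sum.inr (τ.symm j)) (e.symm (Equiv.swap none (some j) (Option.map τ (some (τ.symm j)))))
        = x (τ.symm j) := by
      simp [hM, he, sumOptEquiv]
    have hrest : ∏ l ∈ Finset.univ.erase (τ.symm j),
        M (Sum.inr l) (e.symm (Equiv.swap none (some j) (Option.map τ (some l))))
        = ∏ l ∈ Finset.univ.erase (τ.symm j), W l (τ l) := by
      refine Finset.prod_congr rfl fun l hl => ?_
      have hlj : τ l ≠ j := by
        intro h
        exact (Finset.mem_erase.mp hl).1 (by simpa using congrArg τ.symm h)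
      rw [Option.map_some, Equiv.swap_apply_of_ne_of_ne (by simp) (by simpa using hlj)]
      simp [hM, he, sumOptEquiv]
    rw [hl0, hrest]
    ring

theorem stmt7 {k : ℕ} (W : Matrix (Fin k) (Fin k) ℝ) (x y : Fin k → ℝ) (b : ℝ)
    (hW : ∀ i j, 0 ≤ W i j) (hx : ∀ i, 0 ≤ x i) (hy : ∀ i, 0 ≤ y i) (hb : 0 < b) :
    per (Matrix.fromBlocks (Matrix.of fun (_ : Fin 1) (_ : Fin 1) => b)
        (Matrix.of fun (_ : Fin 1) j => y j) (Matrix.of fun i (_ : Fin 1) => x i) W) ≤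
      b * per (Matrix.of fun i j => W i j + x i * y j / b) := by
  classical
  rw [per_block, per, Finset.mul_sum]
  refine Finset.sum_le_sum fun τ _ => ?_
  simp only [Matrix.of_apply]
  have key := aux_prod_add Finset.univ (fun i => W i (τ i)) (fun i => x i * y (τ i) / b)
    (fun i _ => hW _ _) (fun i _ => div_nonneg (mul_nonneg (hx i) (hy _)) hb.le)
  have h2 := mul_le_mul_of_nonneg_left key hb.le
  have hb' : b ≠ 0 := hb.ne'
  have expand : b * ((∏ i, W i (τ i))
      + ∑ i, (x i * y (τ i) / b) * ∏ l ∈ Finset.univ.erase i, W l (τ l))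
      = b * ∏ l, W l (τ l)
        + ∑ i, y (τ i) * x i * ∏ l ∈ Finset.univ.erase i, W l (τ l) := by
    rw [mul_add, Finset.mul_sum]
    congr 1
    refine Finset.sum_congr rfl fun i _ => ?_
    rw [show b * (x i * y (τ i) / b * ∏ l ∈ Finset.univ.erase i, W l (τ l))
        = x i * y (τ i) / b * b * ∏ l ∈ Finset.univ.erase i, W l (τ l) from by ring,
      div_mul_cancel₀ _ hb']
    ring
  rw [← expand]
  exact h2
end

section
/- Let A be an n×n real positive semidefinite matrix written in block form A = [[B, x],[x^T, a]] with B ∈ ℝ^{(n−1)×(n−1)}, x ∈ ℝ^{n−1}, and a > 0. Then per(A) ≤ a · per(B + (1/a)·x x^T). -/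
/-!
Write `B = Vᵀ V`. Expanding every entry of `B + a⁻¹ x xᵀ`, the quantity
`a · per (B + a⁻¹ x xᵀ)` is a sum over the sets `S` of rows that pick the rank-one part and over
permutations `σ`; the terms with `|S| ≤ 1` add up to `per A` (expand `per A` along its last row).
The remaining terms equal `∑ S T, ψ S ψ T per (Gram (z S) (z T))`, where
`ψ S = ∏ i ∈ S, x i / √a` (or `0` if `|S| ≤ 1`) and `z S` replaces the columns of `V` indexed by
`S` with a new unit vector. Since `n! · per (Gram u w)` is the inner product of the symmetrized
tensors `∑ π, u (π 1) ⊗ ⋯ ⊗ u (π n)` and `∑ π, w (π 1) ⊗ ⋯ ⊗ w (π n)`, this quadratic form in `ψ`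
is a sum of squares.
-/

open Matrix BigOperators

open Finset
open Equiv (Perm)

section GramPermanent

variable {κ ι : Type*} [Fintype κ] [DecidableEq κ] [Fintype ι]

noncomputable def symTensor (z : κ → ι → ℝ) (g : κ → ι) : ℝ :=
  ∑ π : Perm κ, ∏ i, z (π i) (g i)

lemma sum_symTensor_mul_symTensor (z w : κ → ι → ℝ) :
    ∑ g, symTensor z g * symTensor w g =
      Fintype.card (Perm κ) * per (of fun i j => ∑ r, z i r * w j r) := by
  have hterm : ∀ π ρ : Perm κ, ∑ g : κ → ι, (∏ i, z (π i) (g i)) * ∏ i, w (ρ i) (g i) =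
      ∏ j, ∑ r, z j r * w (ρ (π.symm j)) r := by
    intro π ρ
    simp_rw [← prod_mul_distrib]
    refine (Fintype.prod_sum fun i r => z (π i) r * w (ρ i) r).symm.trans ?_
    rw [← Equiv.prod_comp π.symm]
    simp
  calc ∑ g, symTensor z g * symTensor w g
      = ∑ π : Perm κ, ∑ ρ : Perm κ, ∏ j, ∑ r, z j r * w (ρ (π.symm j)) r := by
        simp_rw [symTensor, sum_mul_sum, ← hterm]
        rw [sum_comm]
        exact sum_congr rfl fun π _ => sum_comm
    _ = ∑ _π : Perm κ, per (of fun i j => ∑ r, z i r * w j r) := by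
        refine sum_congr rfl fun π _ => ?_
        rw [← Equiv.sum_comp (Equiv.mulRight π)]
        simp [per]
    _ = _ := by rw [sum_const, card_univ, nsmul_eq_mul]

lemma sum_mul_mul_per_gram_nonneg {𝒮 : Type*} [Fintype 𝒮] (ψ : 𝒮 → ℝ) (z : 𝒮 → κ → ι → ℝ) :
    0 ≤ ∑ s, ∑ t, ψ s * ψ t * per (of fun i j => ∑ r, z s i r * z t j r) := by
  have hsq : Fintype.card (Perm κ) *
      ∑ s, ∑ t, ψ s * ψ t * per (of fun i j => ∑ r, z s i r * z t j r) =
        ∑ g : κ → ι, (∑ s, ψ s * symTensor (z s) g) ^ 2 := by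
    calc Fintype.card (Perm κ) *
          ∑ s, ∑ t, ψ s * ψ t * per (of fun i j => ∑ r, z s i r * z t j r)
        = ∑ s, ∑ t, ∑ g, ψ s * symTensor (z s) g * (ψ t * symTensor (z t) g) := by
          simp_rw [mul_sum, mul_left_comm _ (ψ _ * ψ _), ← sum_symTensor_mul_symTensor, mul_sum]
          exact sum_congr rfl fun s _ => sum_congr rfl fun t _ => sum_congr rfl fun g _ => by ring
      _ = ∑ g : κ → ι, (∑ s, ψ s * symTensor (z s) g) ^ 2 := by
          simp_rw [sq, sum_mul_sum]
          conv_rhs => rw [sum_comm]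
          exact sum_congr rfl fun s _ => sum_comm
  have hcard : (0 : ℝ) < Fintype.card (Perm κ) := by exact_mod_cast Fintype.card_pos
  exact nonneg_of_mul_nonneg_right (hsq ▸ sum_nonneg fun g _ => sq_nonneg _) hcard

end GramPermanent

section Expansion

lemma per_submatrix_equiv {α β : Type*} [DecidableEq α] [Fintype α] [DecidableEq β] [Fintype β]
    (A : Matrix α α ℝ) (e : β ≃ α) : per (A.submatrix e e) = per A := by
  rw [per, per, ← Equiv.sum_comp (Equiv.permCongr e)]
  refine sum_congr rfl fun σ _ => ?_
  rw [← Equiv.prod_comp e]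
  simp [Equiv.permCongr_apply]

lemma per_option {α : Type*} [DecidableEq α] [Fintype α] (M : Matrix (Option α) (Option α) ℝ) :
    per M = M none none * per (M.submatrix some some) +
      ∑ j, ∑ τ : Perm α, M none (some j) *
        ∏ i, M (some i) (if τ i = j then none else some (τ i)) := by
  rw [per, ← Equiv.sum_comp Equiv.Perm.decomposeOption.symm, Fintype.sum_prod_type,
    Fintype.sum_option, per, mul_sum]
  congr 1
  · refine sum_congr rfl fun τ _ => ?_
    simp [Fintype.prod_option]
  · refine sum_congr rfl fun j _ => sum_congr rfl fun τ _ => ?_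
    have hnone : Perm.decomposeOption.symm (some j, τ) none = some j := by
      simp [Perm.decomposeOption_symm_apply]
    have hsome (i : α) : Perm.decomposeOption.symm (some j, τ) (some i) =
        if τ i = j then none else some (τ i) := by
      split_ifs with h <;> simp [Perm.decomposeOption_symm_apply, h, Equiv.swap_apply_of_ne_of_ne]
    simp only [Fintype.prod_option, hnone, hsome]

variable {n : Type*} [Fintype n] [DecidableEq n]

lemma per_fromBlocks_col_row (B : Matrix n n ℝ) (x : n → ℝ) (a : ℝ) :
    per (fromBlocks B (of fun i (_ : Fin 1) => x i) (of fun (_ : Fin 1) j => x j)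
      (of fun (_ : Fin 1) (_ : Fin 1) => a)) =
      a * per B + ∑ i, ∑ σ : Perm n, x i * x (σ i) * ∏ j ∈ {i}ᶜ, B j (σ j) := by
  let e : Option n ≃ n ⊕ Fin 1 :=
    (Equiv.optionEquivSumPUnit n).trans (Equiv.sumCongr (Equiv.refl n) finOneEquiv.symm)
  rw [← per_submatrix_equiv _ e, per_option]
  congr 1
  rw [sum_comm, sum_comm (s := univ (α := n))]
  refine sum_congr rfl fun σ _ => ?_
  rw [← Equiv.sum_comp σ]
  refine sum_congr rfl fun i _ => ?_
  rw [Fintype.prod_eq_mul_prod_compl i, if_pos rfl, ← mul_assoc]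
  congr 1
  · simp [e, mul_comm]
  · refine prod_congr rfl fun k hk => ?_
    rw [if_neg (σ.injective.ne (by simpa using hk))]
    simp [e]

lemma per_add_smul_vecMulVec (B : Matrix n n ℝ) (x : n → ℝ) (c : ℝ) :
    per (B + c • vecMulVec x x) =
      ∑ S : Finset n, ∑ σ : Perm n, (∏ i ∈ S, c * (x i * x (σ i))) * ∏ i ∈ Sᶜ, B i (σ i) := by
  rw [per, sum_comm]
  refine sum_congr rfl fun σ _ => ?_
  rw [← Fintype.prod_add]
  simp [vecMulVec_apply, add_comm]

lemma sum_filter_card_le_one {M : Type*} [AddCommMonoid M] (f : Finset n → M) :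
    ∑ S with S.card ≤ 1, f S = f ∅ + ∑ i, f {i} := by
  have hfilter : ({S | S.card ≤ 1} : Finset (Finset n)) =
      insert ∅ (univ.map ⟨({·}), singleton_injective⟩) := by
    ext S
    rw [mem_filter_univ, Nat.le_one_iff_eq_zero_or_eq_one, card_eq_zero, card_eq_one]
    simp [eq_comm]
  rw [hfilter, sum_insert (by simp), sum_map]
  rfl

end Expansion

section BlockVectors

variable {n ι : Type*} [Fintype ι]

lemma map_perm_eq_iff {S T : Finset n} {σ : Perm n} :
    S.map σ.toEmbedding = T ↔ ∀ i, i ∈ S ↔ σ i ∈ T := by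
  constructor
  · rintro rfl i
    simp
  · intro h
    ext j
    simpa [mem_map_equiv] using h (σ.symm j)

variable [DecidableEq n]

/-- The vectors `z S` of the proof: the Gram matrix of `blockVec V S` and `blockVec V T` only sees
the permutations carrying `S` onto `T`. -/
noncomputable def blockVec (V : Matrix ι n ℝ) (S : Finset n) (i : n) (o : Option ι) : ℝ :=
  if i ∈ S then (if o = none then 1 else 0) else o.elim 0 fun r => V r i

lemma sum_blockVec_mul_blockVec (V : Matrix ι n ℝ) (S T : Finset n) (i j : n) :
    ∑ o, blockVec V S i o * blockVec V T j o =
      if i ∈ S then (if j ∈ T then 1 else 0) else (if j ∈ T then 0 else (Vᵀ * V) i j) := by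
  rw [Fintype.sum_option]
  by_cases hi : i ∈ S <;> by_cases hj : j ∈ T <;> simp [blockVec, hi, hj, mul_apply]

variable [Fintype n]

lemma prod_sum_blockVec_mul_blockVec (V : Matrix ι n ℝ) (S T : Finset n) (σ : Perm n) :
    ∏ i, ∑ o, blockVec V S i o * blockVec V T (σ i) o =
      if S.map σ.toEmbedding = T then ∏ i ∈ Sᶜ, (Vᵀ * V) i (σ i) else 0 := by
  simp_rw [sum_blockVec_mul_blockVec]
  split_ifs with hST
  · rw [← Fintype.prod_ite_mem Sᶜ]
    refine prod_congr rfl fun i _ => ?_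
    by_cases hi : i ∈ S <;> simp [hi, ← map_perm_eq_iff.1 hST i]
  · obtain ⟨i, hi⟩ := not_forall.1 (mt map_perm_eq_iff.2 hST)
    refine prod_eq_zero (mem_univ i) ?_
    by_cases hiS : i ∈ S <;> simp_all

lemma sum_filter_card_prod_mul_prod_nonneg (V : Matrix ι n ℝ) (x : n → ℝ) {c : ℝ} (hc : 0 ≤ c)
    (p : ℕ → Prop) [DecidablePred p] :
    0 ≤ ∑ S with p S.card, ∑ σ : Perm n,
      (∏ i ∈ S, c * (x i * x (σ i))) * ∏ i ∈ Sᶜ, (Vᵀ * V) i (σ i) := by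
  let ψ (S : Finset n) : ℝ := if p S.card then ∏ i ∈ S, √c * x i else 0
  convert sum_mul_mul_per_gram_nonneg ψ (blockVec V) using 1
  rw [sum_filter]
  refine sum_congr rfl fun S _ => ?_
  simp_rw [per, of_apply, prod_sum_blockVec_mul_blockVec, mul_sum]
  rw [sum_comm]
  simp_rw [mul_ite, mul_zero, sum_ite_eq, mem_univ, if_true]
  by_cases hS : p S.card
  · rw [if_pos hS]
    refine sum_congr rfl fun σ _ => ?_
    simp only [ψ, card_map, if_pos hS, prod_map, ← prod_mul_distrib]
    congr 1
    refine prod_congr rfl fun i _ => ?_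
    linear_combination (x i * x (σ i)) * (Real.mul_self_sqrt hc).symm
  · simp [ψ, hS]

end BlockVectors

lemma Matrix.PosSemidef.exists_eq_transpose_mul_self {n : Type*} [Fintype n] [DecidableEq n]
    {B : Matrix n n ℝ} (hB : B.PosSemidef) : ∃ V : Matrix n n ℝ, B = Vᵀ * V := by
  open scoped MatrixOrder in
  obtain ⟨V, hV⟩ := CStarAlgebra.nonneg_iff_eq_star_mul_self.mp hB.nonneg
  exact ⟨V, by simpa [star_eq_conjTranspose] using hV⟩

theorem stmt8 {m : ℕ} (B : Matrix (Fin m) (Fin m) ℝ) (x : Fin m → ℝ) (a : ℝ) (ha : 0 < a)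
    (hA : (Matrix.fromBlocks B (Matrix.of fun i (_ : Fin 1) => x i)
      (Matrix.of fun (_ : Fin 1) j => x j)
      (Matrix.of fun (_ : Fin 1) (_ : Fin 1) => a)).PosSemidef) :
    per (Matrix.fromBlocks B (Matrix.of fun i (_ : Fin 1) => x i)
        (Matrix.of fun (_ : Fin 1) j => x j)
        (Matrix.of fun (_ : Fin 1) (_ : Fin 1) => a)) ≤
      a * per (B + a⁻¹ • Matrix.vecMulVec x x) := by
  have hB : B.PosSemidef := hA.submatrix Sum.inl
  obtain ⟨V, rfl⟩ := hB.exists_eq_transpose_mul_self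
  rw [per_fromBlocks_col_row, per_add_smul_vecMulVec,
    ← sum_filter_add_sum_filter_not _ (fun S : Finset (Fin m) => S.card ≤ 1),
    sum_filter_card_le_one, mul_add, mul_add]
  refine le_add_of_le_of_nonneg (le_of_eq ?_)
    (mul_nonneg ha.le (sum_filter_card_prod_mul_prod_nonneg V x (inv_nonneg.2 ha.le) (¬ · ≤ 1)))
  congr 1
  · simp [per]
  · rw [mul_sum]
    refine sum_congr rfl fun i _ => ?_
    rw [mul_sum]
    refine sum_congr rfl fun σ _ => ?_
    rw [prod_singleton]
    field_simp
end

section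
/- Let A = V^T V be an n×n real positive semidefinite matrix with columns of V denoted v₁, ..., vₙ. Then per(A) = (1/n!) · ‖Σ_{σ ∈ S_n} v_{σ(1)} ⊗ v_{σ(2)} ⊗ ⋯ ⊗ v_{σ(n)}‖². -/
/-
Expanding the square, the squared norm becomes `∑_{σ,τ} ⟨v_σ, v_τ⟩`, where
`v_σ = v_{σ(1)} ⊗ ⋯ ⊗ v_{σ(n)}` is encoded by its coordinates `f ↦ ∏ᵢ V (f i) (σ i)`, and
`⟨v_σ, v_τ⟩ = ∏ᵢ A_{σ(i) τ(i)}`. For fixed `σ`, reindexing by `τ ↦ τ σ⁻¹` turns the inner sum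
over `τ` into `per A`, so the double sum is `n! · per A`.
-/

open Matrix BigOperators

theorem per_eq_sum_prod_comp {α : Type*} [DecidableEq α] [Fintype α] (A : Matrix α α ℝ)
    (σ : Equiv.Perm α) :
    per A = ∑ τ : Equiv.Perm α, ∏ i, A (σ i) (τ i) := by
  refine (Equiv.sum_comp (Equiv.mulRight σ⁻¹) _).symm.trans (Finset.sum_congr rfl fun τ _ => ?_)
  exact (Equiv.prod_comp σ fun i => A i ((τ * σ⁻¹) i)).symm.trans (by simp)

theorem sum_prod_mul_prod_eq_prod_transpose_mul {ι κ R : Type*} [Fintype ι] [DecidableEq ι]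
    [Fintype κ] [CommSemiring R] (V : Matrix κ ι R) (σ τ : ι → ι) :
    ∑ f : ι → κ, (∏ i, V (f i) (σ i)) * ∏ i, V (f i) (τ i) = ∏ i, (Vᵀ * V) (σ i) (τ i) := by
  simp only [← Finset.prod_mul_distrib, Matrix.mul_apply, Matrix.transpose_apply,
    Finset.prod_univ_sum, Fintype.piFinset_univ]

theorem sum_sq_sum_perm_prod_eq_sum_sum_prod {ι κ R : Type*} [Fintype ι] [DecidableEq ι]
    [Fintype κ] [CommSemiring R] (V : Matrix κ ι R) :
    ∑ f : ι → κ, (∑ σ : Equiv.Perm ι, ∏ i, V (f i) (σ i)) ^ 2 =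
      ∑ σ : Equiv.Perm ι, ∑ τ : Equiv.Perm ι, ∏ i, (Vᵀ * V) (σ i) (τ i) := by
  simp only [sq, Finset.sum_mul_sum, ← sum_prod_mul_prod_eq_prod_transpose_mul]
  rw [Finset.sum_comm]
  exact Finset.sum_congr rfl fun σ _ => Finset.sum_comm

/-- `per(Vᵀ V) = (1/n!) · ‖∑_{σ ∈ S_n} v_{σ(1)} ⊗ ⋯ ⊗ v_{σ(n)}‖²`, where the
tensor `v₁ ⊗ ⋯ ⊗ vₙ ∈ ℝ^{dⁿ}` is represented by the function
`(f : Fin n → Fin d) ↦ ∏ i, v_i (f i)`, and the squared Euclidean norm is the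
sum of squares of coordinates. -/
theorem stmt9 {n d : ℕ} (V : Matrix (Fin d) (Fin n) ℝ) :
    per (Vᵀ * V) =
      (1 / (n.factorial : ℝ)) *
        ∑ f : Fin n → Fin d, (∑ σ : Equiv.Perm (Fin n), ∏ i, V (f i) (σ i)) ^ 2 := by
  rw [sum_sq_sum_perm_prod_eq_sum_sum_prod, ← Finset.sum_congr rfl fun σ _ =>
    per_eq_sum_prod_comp (Vᵀ * V) σ, Finset.sum_const, Finset.card_univ, Fintype.card_perm,
    Fintype.card_fin, nsmul_eq_mul]
  have hfact : (n.factorial : ℝ) ≠ 0 := Nat.cast_ne_zero.mpr n.factorial_ne_zero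
  field_simp
end

section
/- Let A ∈ ℝ^{n×n}_{≥0} be non-negative with all leading diagonal pivot values positive, and define the permanent process: A^{(1)} = A and for t = 1,...,n−1, a^{(t+1)}_{i,j} = a^{(t)}_{i,j} + a^{(t)}_{i,t}·a^{(t)}_{t,j}/a^{(t)}_{t,t} for i, j ≥ t+1, with all other entries unchanged. Then per(A) ≤ Π_{i=1}^{n} a^{(i)}_{i,i}. -/
open Matrix BigOperators

/-- The permanent process (0-indexed): `proc A 0 = A` corresponds to `A⁽¹⁾`, and the
step producing `proc A (t+1)` uses pivot index `t`, updating the entries `(i,j)` with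
`i, j > t` by `a_{i,j} ← a_{i,j} + a_{i,t}·a_{t,j}/a_{t,t}`. -/
noncomputable def proc {n : ℕ} (A : Matrix (Fin n) (Fin n) ℝ) : ℕ → Matrix (Fin n) (Fin n) ℝ
  | 0 => A
  | t + 1 =>
    Matrix.of fun i j =>
      if h : t < (i : ℕ) ∧ t < (j : ℕ) then
        proc A t i j +
          proc A t i ⟨t, h.2.trans j.isLt⟩ * proc A t ⟨t, h.1.trans i.isLt⟩ j /
            proc A t ⟨t, h.1.trans i.isLt⟩ ⟨t, h.1.trans i.isLt⟩
      else proc A t i j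

/-! Induction on `n`, peeling off the first pivot. Expanding `per A` along the first column gives
`a₀₀ · per C + ∑ᵢ aᵢ₀ · per (C with row i replaced by the first row of A)`, where `C` is the
trailing block. The `i`-th of these terms is `a₀₀` times the permanent of `C` with row `i` taken
from the rank-one matrix `D = (aᵢ₀ a₀ⱼ / a₀₀)`. For non-negative matrices these permanents and
`per C` are among the non-negative terms of `per (C + D)` expanded row by row, and `C + D` is the
trailing block after the first step of the process, to which induction applies. -/

theorem Finset.prod_add_sum_mul_prod_erase_le {ι R : Type*} [DecidableEq ι] [CommSemiring R]
    [PartialOrder R] [IsOrderedRing R] (s : Finset ι) {f g : ι → R}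
    (hf : ∀ i ∈ s, 0 ≤ f i) (hg : ∀ i ∈ s, 0 ≤ g i) :
    ∏ i ∈ s, f i + ∑ i ∈ s, g i * ∏ j ∈ s.erase i, f j ≤ ∏ i ∈ s, (f i + g i) := by
  induction s using Finset.induction_on with
  | empty => simp
  | @insert a s ha ih =>
    simp only [Finset.forall_mem_insert] at hf hg
    have hsum : 0 ≤ ∑ i ∈ s, g i * ∏ j ∈ s.erase i, f j := Finset.sum_nonneg fun i hi =>
      mul_nonneg (hg.2 i hi) (Finset.prod_nonneg fun j hj => hf.2 j (Finset.mem_of_mem_erase hj))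
    have herase : ∀ i ∈ s, ∏ j ∈ (insert a s).erase i, f j = f a * ∏ j ∈ s.erase i, f j :=
      fun i hi => by
        rw [Finset.erase_insert_of_ne (ne_of_mem_of_not_mem hi ha).symm,
          Finset.prod_insert fun h => ha (Finset.mem_of_mem_erase h)]
    rw [Finset.prod_insert ha, Finset.prod_insert ha, Finset.sum_insert ha,
      Finset.erase_insert ha, Finset.sum_congr rfl fun i hi => by rw [herase i hi]]
    calc f a * ∏ i ∈ s, f i + (g a * ∏ i ∈ s, f i + ∑ i ∈ s, g i * (f a * ∏ j ∈ s.erase i, f j))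
        = f a * (∏ i ∈ s, f i + ∑ i ∈ s, g i * ∏ j ∈ s.erase i, f j) + g a * ∏ i ∈ s, f i := by
          simp only [mul_add, Finset.mul_sum, mul_left_comm (g _) (f a)]; ring
      _ ≤ f a * (∏ i ∈ s, f i + ∑ i ∈ s, g i * ∏ j ∈ s.erase i, f j) + g a * ∏ i ∈ s, f i +
            g a * ∑ i ∈ s, g i * ∏ j ∈ s.erase i, f j :=
          le_add_of_nonneg_right (mul_nonneg hg.1 hsum)
      _ = (f a + g a) * (∏ i ∈ s, f i + ∑ i ∈ s, g i * ∏ j ∈ s.erase i, f j) := by ring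
      _ ≤ (f a + g a) * ∏ i ∈ s, (f i + g i) :=
          mul_le_mul_of_nonneg_left (ih hf.2 hg.2) (add_nonneg hf.1 hg.1)

theorem Matrix.permanent_succ_column_zero_updateRow {n : ℕ} {R : Type*} [CommSemiring R]
    (A : Matrix (Fin (n + 1)) (Fin (n + 1)) R) :
    A.permanent = A 0 0 * (A.submatrix Fin.succ Fin.succ).permanent +
      ∑ i : Fin n, A i.succ 0 *
        ((A.submatrix Fin.succ Fin.succ).updateRow i fun j => A 0 j.succ).permanent := by
  have hterm : ∀ (p : Fin (n + 1)) (τ : Equiv.Perm (Fin n)),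
      ∏ j, A (Equiv.Perm.decomposeFin.symm (p, τ) j) j =
        A p 0 * ∏ x : Fin n, A (Equiv.swap 0 p (τ x).succ) x.succ := by
    intro p τ
    simp [Fin.prod_univ_succ, Equiv.Perm.decomposeFin_symm_apply_zero,
      Equiv.Perm.decomposeFin_symm_apply_succ]
  rw [permanent, ← Equiv.sum_comp Equiv.Perm.decomposeFin.symm, Fintype.sum_prod_type,
    Fin.sum_univ_succ]
  simp only [hterm, ← Finset.mul_sum, permanent]
  congr 1
  refine Finset.sum_congr rfl fun i _ => congrArg _ <| Finset.sum_congr rfl fun τ _ =>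
    Finset.prod_congr rfl fun x _ => ?_
  by_cases h : τ x = i
  · rw [h, Equiv.swap_apply_right, updateRow_self]
  · rw [Equiv.swap_apply_of_ne_of_ne (Fin.succ_ne_zero _) (by simpa using h), updateRow_ne h,
      submatrix_apply]

theorem per_eq_permanent {α : Type*} [DecidableEq α] [Fintype α] (A : Matrix α α ℝ) :
    per A = A.permanent :=
  permanent_transpose A

theorem per_updateRow {α : Type*} [DecidableEq α] [Fintype α] (M : Matrix α α ℝ) (i : α)
    (v : α → ℝ) :
    per (M.updateRow i v) =
      ∑ σ : Equiv.Perm α, v (σ i) * ∏ k ∈ Finset.univ.erase i, M k (σ k) := by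
  refine Finset.sum_congr rfl fun σ _ => ?_
  rw [← Finset.mul_prod_erase _ _ (Finset.mem_univ i), updateRow_self]
  exact congrArg _ <| Finset.prod_congr rfl fun k hk => by
    rw [updateRow_ne (Finset.ne_of_mem_erase hk)]

theorem per_add_sum_per_updateRow_le {α : Type*} [DecidableEq α] [Fintype α]
    {C D : Matrix α α ℝ} (hC : ∀ i j, 0 ≤ C i j) (hD : ∀ i j, 0 ≤ D i j) :
    per C + ∑ i, per (C.updateRow i (D i)) ≤ per (C + D) :=
  calc per C + ∑ i, per (C.updateRow i (D i))
      = ∑ σ : Equiv.Perm α, (∏ k, C k (σ k) +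
          ∑ i, D i (σ i) * ∏ k ∈ Finset.univ.erase i, C k (σ k)) := by
        simp only [per_updateRow]
        rw [Finset.sum_comm, per, ← Finset.sum_add_distrib]
    _ ≤ ∑ σ : Equiv.Perm α, ∏ k, (C k (σ k) + D k (σ k)) :=
        Finset.sum_le_sum fun σ _ => Finset.prod_add_sum_mul_prod_erase_le _
          (fun k _ => hC k (σ k)) (fun k _ => hD k (σ k))
    _ = per (C + D) := rfl

theorem proc_nonneg {n : ℕ} {A : Matrix (Fin n) (Fin n) ℝ} (hA : ∀ i j, 0 ≤ A i j) (t : ℕ) :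
    ∀ i j, 0 ≤ proc A t i j := by
  induction t with
  | zero => exact hA
  | succ t ih =>
    intro i j
    rw [proc, of_apply]
    split_ifs
    · exact add_nonneg (ih _ _) (div_nonneg (mul_nonneg (ih _ _) (ih _ _)) (ih _ _))
    · exact ih i j

theorem proc_one_submatrix_succ {n : ℕ} (A : Matrix (Fin (n + 1)) (Fin (n + 1)) ℝ) :
    (proc A 1).submatrix Fin.succ Fin.succ =
      A.submatrix Fin.succ Fin.succ + of fun i j => A i.succ 0 * A 0 j.succ / A 0 0 := by
  ext i j
  rw [submatrix_apply, proc, of_apply, dif_pos ⟨i.succ_pos, j.succ_pos⟩]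
  rfl

theorem proc_submatrix_succ {n : ℕ} (A : Matrix (Fin (n + 1)) (Fin (n + 1)) ℝ) (t : ℕ) :
    proc ((proc A 1).submatrix Fin.succ Fin.succ) t =
      (proc A (t + 1)).submatrix Fin.succ Fin.succ := by
  induction t with
  | zero => rfl
  | succ t ih =>
    ext i j
    rw [submatrix_apply, proc.eq_2 _ t, proc.eq_2 A (t + 1), of_apply, of_apply, ih]
    simp only [submatrix_apply, Fin.val_succ, add_lt_add_iff_right]
    rfl

theorem per_le_pivot_mul_per_proc_one {n : ℕ} {A : Matrix (Fin (n + 1)) (Fin (n + 1)) ℝ}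
    (hA : ∀ i j, 0 ≤ A i j) (h0 : 0 < A 0 0) :
    per A ≤ A 0 0 * per ((proc A 1).submatrix Fin.succ Fin.succ) := by
  set C := A.submatrix Fin.succ Fin.succ
  set D : Matrix (Fin n) (Fin n) ℝ := of fun i j => A i.succ 0 * A 0 j.succ / A 0 0
  have hD : ∀ i j, 0 ≤ D i j := fun i j =>
    div_nonneg (mul_nonneg (hA _ _) (hA _ _)) h0.le
  have hDrow : ∀ i, D i = (A i.succ 0 / A 0 0) • fun j => A 0 j.succ := fun i => by
    ext j
    simp [D, div_mul_eq_mul_div]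
  calc per A
      = A 0 0 * per C + ∑ i, A i.succ 0 * per (C.updateRow i fun j => A 0 j.succ) := by
        simp only [per_eq_permanent]
        exact permanent_succ_column_zero_updateRow A
    _ = A 0 0 * (per C + ∑ i, per (C.updateRow i (D i))) := by
        simp only [hDrow, per_eq_permanent, permanent_updateRow_smul, mul_add, Finset.mul_sum,
          ← mul_assoc, mul_div_cancel₀ _ h0.ne']
    _ ≤ A 0 0 * per (C + D) :=
        mul_le_mul_of_nonneg_left (per_add_sum_per_updateRow_le (fun _ _ => hA _ _) hD) h0.le
    _ = A 0 0 * per ((proc A 1).submatrix Fin.succ Fin.succ) := by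
        rw [proc_one_submatrix_succ]

/-- The permanent of a non-negative matrix is at most the product of the diagonal
pivots produced by the permanent process. -/
theorem stmt11 {n : ℕ} (A : Matrix (Fin n) (Fin n) ℝ)
    (hA : ∀ i j, 0 ≤ A i j) (hpiv : ∀ t : Fin n, 0 < proc A (t : ℕ) t t) :
    per A ≤ ∏ i : Fin n, proc A (i : ℕ) i i := by
  induction n with
  | zero => simp [per_eq_permanent, permanent_isEmpty]
  | succ n ih =>
    set B := (proc A 1).submatrix Fin.succ Fin.succ
    have hB : ∀ i j, 0 ≤ B i j := fun i j => proc_nonneg hA 1 i.succ j.succ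
    have hprocB : ∀ t : Fin n, proc B t t t = proc A (t.succ : ℕ) t.succ t.succ := fun t => by
      rw [proc_submatrix_succ]
      rfl
    calc per A ≤ A 0 0 * per B := per_le_pivot_mul_per_proc_one hA (hpiv 0)
      _ ≤ A 0 0 * ∏ i : Fin n, proc B i i i :=
          mul_le_mul_of_nonneg_left (ih B hB fun t => hprocB t ▸ hpiv t.succ) (hpiv 0).le
      _ = ∏ i : Fin (n + 1), proc A i i i := by
          rw [Fin.prod_univ_succ]
          simp only [hprocB]
          rfl
end

section
/- Let A ∈ ℝ^{n×n}_{≥0} be non-negative with positive diagonal, and define u_{i,j} for i,j ∈ [n] by the recursion u_{i,j} = a_{i,j} + Σ_{s < min(i,j)} u_{i,s}·u_{s,j}/u_{s,s}. If B ∈ ℝ^{n×n}_{≥0} satisfies a_{i,j} + Σ_{s < min(i,j)} b_{i,s}·b_{s,j}/a_{s,s} ≤ b_{i,j} for all i,j, and u_{s,s} ≥ a_{s,s} for all s, then u_{i,j} ≤ b_{i,j} for all i, j. -/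
open Matrix BigOperators

theorem stmt13 {n : ℕ} (A B U : Matrix (Fin n) (Fin n) ℝ)
    (hA : ∀ i j, 0 ≤ A i j) (hdiag : ∀ s, 0 < A s s)
    (hB : ∀ i j, 0 ≤ B i j) (hU : ∀ i j, 0 ≤ U i j)
    (hu : ∀ i j, U i j = A i j +
      ∑ s : Fin n, if (s : ℕ) < min (i : ℕ) (j : ℕ) then U i s * U s j / U s s else 0)
    (hud : ∀ s, A s s ≤ U s s)
    (hb : ∀ i j, A i j +
      (∑ s : Fin n, if (s : ℕ) < min (i : ℕ) (j : ℕ) then B i s * B s j / A s s else 0)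
        ≤ B i j) :
    ∀ i j, U i j ≤ B i j := by
  have key : ∀ k : ℕ, ∀ i j : Fin n, min (i : ℕ) (j : ℕ) = k → U i j ≤ B i j := by
    intro k
    induction k using Nat.strong_induction_on with
    | _ k ih =>
      intro i j hk
      rw [hu i j]
      refine le_trans ?_ (hb i j)
      refine add_le_add le_rfl (Finset.sum_le_sum fun s _ => ?_)
      by_cases hs : (s : ℕ) < min (i : ℕ) (j : ℕ)
      · simp only [hs, if_true]
        have hsk : (s : ℕ) < k := hk ▸ hs
        have hsi : (s : ℕ) < (i : ℕ) := lt_of_lt_of_le hs (min_le_left _ _)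
        have hsj : (s : ℕ) < (j : ℕ) := lt_of_lt_of_le hs (min_le_right _ _)
        have h1 : U i s ≤ B i s := ih _ hsk i s (by omega)
        have h2 : U s j ≤ B s j := ih _ hsk s j (by omega)
        have hU0 : 0 < U s s := lt_of_lt_of_le (hdiag s) (hud s)
        calc U i s * U s j / U s s ≤ U i s * U s j / A s s := by
              apply div_le_div_of_nonneg_left (mul_nonneg (hU _ _) (hU _ _)) (hdiag s) (hud s)
          _ ≤ B i s * B s j / A s s := by
              gcongr <;> first
                | exact (hdiag s).le | exact h1 | exact h2
                | exact hU _ _ | exact hB _ _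
      · simp [hs]
  intro i j
  exact key _ i j rfl
end

section
/- Let c > 1 and let A be the n×n matrix with entries a_{i,j} = c^{−|i−j|}. Apply the permanent process (A^{(1)} = A; a^{(t+1)}_{i,j} = a^{(t)}_{i,j} + a^{(t)}_{i,t}·a^{(t)}_{t,j}/a^{(t)}_{t,t} for i,j ≥ t+1). Then for all i, j, the final entries satisfy a^{(n)}_{i,j} = c^{−|i−j|} · (1 + Σ_{k=1}^{min(i,j)−1} 2^{k−1}·c^{−2k}). -/
open Matrix BigOperators

/-!
The matrix `c^{-|i-j|}` is a Kac–Murdock–Szegő matrix. By induction on `t`, after `t` steps of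
the process its entry `(i, j)` is `c^{-|i-j|} + c^{m-i} c^{m-j} g(m)` with `m = min(i, j, t)`
and `g(m) = ∑_{k=1}^{m} 2^{k-1} c^{-2k}`: the pivot row and column are `c^{t-i} (1 + g(t))` and
`c^{t-j} (1 + g(t))`, the pivot is `1 + g(t) > 0`, and the update is absorbed by the recurrence
`g(t+1) = c^{-2} (1 + 2 g(t))`. Once `t ≥ min(i, j)` the two terms combine to
`c^{-|i-j|} (1 + g(min(i, j)))`.
-/

open Finset

section

variable {n : ℕ} (A : Matrix (Fin n) (Fin n) ℝ) {t : ℕ} {i j : Fin n}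

lemma proc_succ_apply_of_lt (hi : t < i) (hj : t < j) :
    proc A (t + 1) i j =
      proc A t i j + proc A t i ⟨t, hj.trans j.isLt⟩ * proc A t ⟨t, hi.trans i.isLt⟩ j /
        proc A t ⟨t, hi.trans i.isLt⟩ ⟨t, hi.trans i.isLt⟩ := by
  rw [proc, of_apply, dif_pos ⟨hi, hj⟩]

lemma proc_succ_apply_of_not_lt (h : ¬(t < i ∧ t < j)) : proc A (t + 1) i j = proc A t i j := by
  rw [proc, of_apply, dif_neg h]

end

noncomputable def kmsSeries (c : ℝ) (s : ℕ) : ℝ :=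
  ∑ k ∈ Icc 1 s, (2 : ℝ) ^ (k - 1) * c ^ (-(2 * (k : ℤ)))

lemma kmsSeries_eq_sum_range (c : ℝ) (s : ℕ) :
    kmsSeries c s = ∑ k ∈ range s, (2 : ℝ) ^ k * c ^ (-(2 * ((k : ℤ) + 1))) := by
  rw [kmsSeries, ← Ico_add_one_right_eq_Icc, sum_Ico_eq_sum_range]
  simp [add_comm]

lemma kmsSeries_succ {c : ℝ} (hc : c ≠ 0) (s : ℕ) :
    kmsSeries c (s + 1) = c ^ (-2 : ℤ) * (1 + 2 * kmsSeries c s) := by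
  rw [kmsSeries_eq_sum_range, kmsSeries_eq_sum_range, sum_range_succ', mul_sum,
    mul_add (c ^ (-2 : ℤ)), mul_sum, add_comm]
  congr 1
  · norm_num
  · refine sum_congr rfl fun k _ => ?_
    rw [show -(2 * (((k + 1 : ℕ) : ℤ) + 1)) = -2 + -(2 * ((k : ℤ) + 1)) by push_cast; ring,
      zpow_add₀ hc]
    ring

lemma kmsSeries_nonneg (c : ℝ) (s : ℕ) : 0 ≤ kmsSeries c s :=
  sum_nonneg fun k _ => mul_nonneg (by positivity) (Even.zpow_nonneg ⟨-(k : ℤ), by ring⟩ c)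

noncomputable def kmsProcEntry (c : ℝ) (t i j : ℕ) : ℝ :=
  c ^ (-|(i : ℤ) - j|) +
    c ^ ((min (min i j) t : ℕ) - (i : ℤ)) * c ^ ((min (min i j) t : ℕ) - (j : ℤ)) *
      kmsSeries c (min (min i j) t)

section KMS

variable {c : ℝ} {t i j : ℕ}

lemma kmsProcEntry_zero : kmsProcEntry c 0 i j = c ^ (-|(i : ℤ) - j|) := by
  simp [kmsProcEntry, kmsSeries]

lemma kmsProcEntry_pivot_row (hi : t ≤ i) :
    kmsProcEntry c t i t = c ^ ((t : ℤ) - i) * (1 + kmsSeries c t) := by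
  have hm : min (min i t) t = t := by omega
  rw [kmsProcEntry, hm, abs_of_nonneg (by omega), neg_sub, sub_self, zpow_zero]
  ring

lemma kmsProcEntry_pivot_col (hj : t ≤ j) :
    kmsProcEntry c t t j = c ^ ((t : ℤ) - j) * (1 + kmsSeries c t) := by
  have hm : min (min t j) t = t := by omega
  rw [kmsProcEntry, hm, abs_of_nonpos (by omega), neg_neg, sub_self, zpow_zero]
  ring

lemma kmsProcEntry_pivot : kmsProcEntry c t t t = 1 + kmsSeries c t := by
  simpa using kmsProcEntry_pivot_row (c := c) (le_refl t)

lemma kmsProcEntry_succ_of_lt (hc : c ≠ 0) (hi : t < i) (hj : t < j) :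
    kmsProcEntry c (t + 1) i j =
      kmsProcEntry c t i j + kmsProcEntry c t i t * kmsProcEntry c t t j / kmsProcEntry c t t t := by
  rw [kmsProcEntry_pivot_row hi.le, kmsProcEntry_pivot_col hj.le, kmsProcEntry_pivot]
  have hm : min (min i j) t = t := by omega
  have hm' : min (min i j) (t + 1) = t + 1 := by omega
  have hpos : 0 < 1 + kmsSeries c t := by linarith [kmsSeries_nonneg c t]
  simp only [kmsProcEntry, hm, hm', kmsSeries_succ hc, Nat.cast_add, Nat.cast_one,
    add_sub_right_comm _ (1 : ℤ), zpow_add_one₀ hc, _root_.zpow_neg, zpow_ofNat]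
  field_simp
  ring

lemma kmsProcEntry_succ_of_not_lt (h : ¬(t < i ∧ t < j)) :
    kmsProcEntry c (t + 1) i j = kmsProcEntry c t i j := by
  have hm : min (min i j) (t + 1) = min (min i j) t := by omega
  rw [kmsProcEntry, hm, kmsProcEntry]

lemma kmsProcEntry_of_min_le (hc : c ≠ 0) (ht : min i j ≤ t) :
    kmsProcEntry c t i j = c ^ (-|(i : ℤ) - j|) * (1 + kmsSeries c (min i j)) := by
  have hm : min (min i j) t = min i j := min_eq_left ht
  have hexp : c ^ ((min i j : ℕ) - (i : ℤ)) * c ^ ((min i j : ℕ) - (j : ℤ)) =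
      c ^ (-|(i : ℤ) - j|) := by
    rw [← zpow_add₀ hc]
    congr 1
    rcases le_total i j with hij | hij
    · rw [min_eq_left hij, abs_of_nonpos (by omega)]; ring
    · rw [min_eq_right hij, abs_of_nonneg (by omega)]; ring
  rw [kmsProcEntry, hm, hexp]
  ring

end KMS

lemma proc_eq_kmsProcEntry {n : ℕ} {c : ℝ} (hc : c ≠ 0) {A : Matrix (Fin n) (Fin n) ℝ}
    (hA : ∀ i j : Fin n, A i j = c ^ (-|((i : ℕ) : ℤ) - ((j : ℕ) : ℤ)|)) (t : ℕ) (i j : Fin n) :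
    proc A t i j = kmsProcEntry c t i j := by
  induction t generalizing i j with
  | zero => rw [proc, hA, kmsProcEntry_zero]
  | succ t ih =>
    by_cases h : t < i ∧ t < j
    · rw [proc_succ_apply_of_lt A h.1 h.2, ih, ih, ih, ih, kmsProcEntry_succ_of_lt hc h.1 h.2]
    · rw [proc_succ_apply_of_not_lt A h, ih, kmsProcEntry_succ_of_not_lt h]

/-- Indices are 0-based: `min(i,j) − 1` of the 1-based statement becomes `min i j`. -/
theorem stmt15 {n : ℕ} (c : ℝ) (hc : 1 < c) (A : Matrix (Fin n) (Fin n) ℝ)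
    (hA : ∀ i j : Fin n, A i j = c ^ (-|((i : ℕ) : ℤ) - ((j : ℕ) : ℤ)|)) :
    ∀ i j : Fin n,
      proc A n i j =
        c ^ (-|((i : ℕ) : ℤ) - ((j : ℕ) : ℤ)|) *
          (1 + ∑ k ∈ Finset.Icc 1 (min (i : ℕ) (j : ℕ)),
            (2 : ℝ) ^ (k - 1) * c ^ (-(2 * (k : ℤ)))) := by
  have hc0 : c ≠ 0 := by positivity
  intro i j
  rw [proc_eq_kmsProcEntry hc0 hA, kmsProcEntry_of_min_le hc0 ((min_le_left _ _).trans i.isLt.le),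
    kmsSeries]
end
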